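/- arXiv:1802.08464 — 3 statements merged into one kernel-verified Lean document; each statement's English description precedes it below -/
import Mathlib

section
/- Let C : X × X → ℝ be a symmetric three-times continuously differentiable kernel on X ⊆ ℝ^d, let ‖·‖_sep be a norm on ℝ^d, and let s_max ∈ ℕ₊, ε_near > 0, Δ ≥ 2ε_near and positive constants a₁, a₂, v, b₂, λ₁, b₃, c₀, c₁, e₀, e₁, e₂, e₃, h₀, h₁, h₂ be such that: at x = x′: C(x,x) = 1, |∂_{1,i}C(x,x)| ≤ a₁, |∂_{1,i}∂_{2,j}C(x,x)| ≤ a₂ for i ≠ j, and ∂_{1,i}∂_{2,i}C(x,x) ≥ v; for ‖x−x′‖_sep ≤ ε_near: every eigenvalue of ∇₂²C(x,x′) lies in [−b₂, −λ₁] and ‖∇₁∇₂²C(x,x′)‖ ≤ b₃; for ‖x−x′‖_sep ≥ ε_near: |C(x,x′)| ≤ c₀ and ‖∇₁C(x,x′)‖ ≤ c₁; for ‖x−x′‖_sep ≥ Δ/2: |C| ≤ e₀/s_max, ‖∇₁C‖ ≤ e₁/s_max, ‖∇₂²C‖ ≤ e₂/s_max, ‖∇₁∇₂²C‖ ≤ e₃/s_max;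 for ‖x−x′‖_sep ≥ Δ: |C| ≤ h₀/s_max, |∂_{1,i}C| ≤ h₁/s_max, ‖∂_{1,i}∇₂C‖₁ ≤ h₂/s_max. Set u = (a₁ + h₁)/√v and suppose there exist δ, δ′ < 1 with v⁻¹(d·a₂ + h₂) ≤ δ, h₀ + d·u²/(1−δ) ≤ δ′, ε_η := 1 − ((c₀+e₀)/(1−δ′) + u√d·(c₁+e₁)/(√v(1−δ)(1−δ′))) > 0, and λ_η := (1 − δ′/(1−δ′))λ₁ − e₂/(1−δ′) − u√d·(b₃+e₃)/(√v(1−δ)(1−δ′)) > 0. Then for every s ≤ s_max, every a₁,…,a_s ∈ ℝ \ {0} and x₁,…,x_s ∈ X pairwise Δ-separated in ‖·‖_sep, the matrix Υ is invertible and the function η(x) = (Υ⁻¹u_s)ᵀ f(x) satisfies: η(x_i) = sign(a_i) and ∇η(x_i) = 0 for all i; |η(x)| < 1 − ε_η whenever ‖x − x_i‖_sep ≥ ε_near for all i; and −sign(a_i)∇²η(x) ≻ λ_η·Id whenever ‖x − x_i‖_sep ≤ ε_near. -/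
open Real

noncomputable section

abbrev Euc (d : ℕ) := EuclideanSpace ℝ (Fin d)

/-- Index set of size `s(d+1)`. -/
abbrev Idx (s d : ℕ) := Fin s ⊕ (Fin s × Fin d)

def pdv {d : ℕ} (f : Euc d → ℝ) (i : Fin d) (z : Euc d) : ℝ :=
  fderiv ℝ f z (EuclideanSpace.single i 1)

/-- `∂_{1,i} C`. -/
def pd1 {d : ℕ} (C : Euc d → Euc d → ℝ) (i : Fin d) (x y : Euc d) : ℝ :=
  pdv (fun x' => C x' y) i x

/-- `∂_{1,i}∂_{2,j} C`. -/
def pd12 {d : ℕ} (C : Euc d → Euc d → ℝ) (i j : Fin d) (x y : Euc d) : ℝ :=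
  pdv (fun x' => pdv (C x') j y) i x

/-- Hessian matrix of a scalar function. -/
def hess {d : ℕ} (f : Euc d → ℝ) (z : Euc d) : Matrix (Fin d) (Fin d) ℝ :=
  fun i j => pdv (fun w => pdv f j w) i z

/-- Hessian of a kernel in its second variable. -/
def hess2 {d : ℕ} (C : Euc d → Euc d → ℝ) (x y : Euc d) : Matrix (Fin d) (Fin d) ℝ :=
  hess (C x) y

/-- `∂_{1,k} ∇₂² C`. -/
def pd1hess2 {d : ℕ} (C : Euc d → Euc d → ℝ) (k : Fin d) (x y : Euc d) :
    Matrix (Fin d) (Fin d) ℝ :=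
  fun i j => pdv (fun x' => hess2 C x' y i j) k x

/-- Spectral norm of a real matrix. -/
def specNorm {ι : Type*} [Fintype ι] [DecidableEq ι] (A : Matrix ι ι ℝ) : ℝ :=
  ‖LinearMap.toContinuousLinearMap (Matrix.toEuclideanLin A)‖

/-- The vector `f(x) ∈ ℝ^{s(d+1)}` of (normalized) kernel sections and first
derivatives at the points `x₁,…,x_s`. -/
def kerVec {d s : ℕ} (C : Euc d → Euc d → ℝ) (x : Fin s → Euc d)
    (v : Fin s → Fin d → ℝ) (z : Euc d) : Idx s d → ℝ :=
  Sum.elim (fun i => C (x i) z) (fun p => v p.1 p.2 * pd1 C p.2 (x p.1) z)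

/-- The matrix `Υ ∈ ℝ^{s(d+1)×s(d+1)}` of (normalized) kernel values and derivatives
at the points `x₁,…,x_s`. -/
def kerMat {d s : ℕ} (C : Euc d → Euc d → ℝ) (x : Fin s → Euc d)
    (v : Fin s → Fin d → ℝ) : Matrix (Idx s d) (Idx s d) ℝ :=
  fun r c =>
    match r, c with
    | Sum.inl i, Sum.inl j => C (x i) (x j)
    | Sum.inl j, Sum.inr (l, a) => v l a * pd1 C a (x l) (x j)
    | Sum.inr (l, a), Sum.inl j => v l a * pd1 C a (x l) (x j)
    | Sum.inr (l, a), Sum.inr (l', b) => v l a * v l' b * pd12 C a b (x l) (x l')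

/-- The padded sign vector `u_s = (sign(a₁),…,sign(a_s),0,…,0)`. -/
def signVec {d s : ℕ} (a : Fin s → ℝ) : Idx s d → ℝ :=
  Sum.elim (fun i => Real.sign (a i)) (fun _ => 0)

/-!
Normalizing the derivative rows by `v` puts ones on the diagonal of `Υ`, and `Δ`-separation makes
every interaction between two distinct points `O(1 / s_max)`. With at most `s_max` points, `Υ` is
therefore block diagonally dominant in the `ℓ^∞` operator norm, hence invertible, and the
coefficients `α = Υ⁻¹ u_s` satisfy `|α_i| ≤ 1 / (1 - δ')`, `|α_{(l,b)}| ≤ u / ((1 - δ)(1 - δ'))`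
and `|α_i - sign a_i| ≤ δ' / (1 - δ')`. By symmetry of `C`, `η(x_i)` and `v_{ij} ∂_j η(x_i)` are
entries of `Υ α = u_s`. Away from all `x_i`, at most one `x_l` lies within `Δ / 2` of `z`, so
`|η z|` is bounded by the `ε_near` row of the table for that point plus `s_max · (e / s_max)` for
the others; near `x_i` the same splitting shows that the Hessian of `η` is dominated by
`α_i ∇₂²C(x_i, ·)`, whose curvature `≤ -λ₁` has the sign of `a_i`.
-/

open Function

section Slices

variable {E F G : Type*} [NormedAddCommGroup E] [NormedSpace ℝ E] [NormedAddCommGroup F]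
  [NormedSpace ℝ F] [NormedAddCommGroup G] [NormedSpace ℝ G]

theorem fderiv_comp_prodMk_left_apply {f : E × F → G} {x : E} {y : F}
    (hf : DifferentiableAt ℝ f (x, y)) (u : E) :
    fderiv ℝ (fun x' => f (x', y)) x u = fderiv ℝ f (x, y) (u, 0) := by
  have h : HasFDerivAt (fun x' => f (x', y)) ((fderiv ℝ f (x, y)).comp (.inl ℝ E F)) x :=
    hf.hasFDerivAt.comp x (hasFDerivAt_prodMk_left x y)
  rw [h.fderiv]
  rfl

theorem fderiv_comp_prodMk_right_apply {f : E × F → G} {x : E} {y : F}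
    (hf : DifferentiableAt ℝ f (x, y)) (u : F) :
    fderiv ℝ (fun y' => f (x, y')) y u = fderiv ℝ f (x, y) (0, u) := by
  have h : HasFDerivAt (fun y' => f (x, y')) ((fderiv ℝ f (x, y)).comp (.inr ℝ E F)) y :=
    hf.hasFDerivAt.comp y (hasFDerivAt_prodMk_right x y)
  rw [h.fderiv]
  rfl

theorem fderiv_fderiv_comp_prodMk_left_apply {f : E × F → G} {x : E} {y : F}
    (hf : DifferentiableAt ℝ (fderiv ℝ f) (x, y)) (u : E) (w : E × F) :
    fderiv ℝ (fun x' => fderiv ℝ f (x', y) w) x u = fderiv ℝ (fderiv ℝ f) (x, y) (u, 0) w := by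
  rw [fderiv_comp_prodMk_left_apply (f := fun p => fderiv ℝ f p w)
    (hf.clm_apply (differentiableAt_const w)), fderiv_clm_apply hf (differentiableAt_const w)]
  simp

theorem fderiv_fderiv_comp_prodMk_right_apply {f : E × F → G} {x : E} {y : F}
    (hf : DifferentiableAt ℝ (fderiv ℝ f) (x, y)) (u : F) (w : E × F) :
    fderiv ℝ (fun y' => fderiv ℝ f (x, y') w) y u = fderiv ℝ (fderiv ℝ f) (x, y) (0, u) w := by
  rw [fderiv_comp_prodMk_right_apply (f := fun p => fderiv ℝ f p w)
    (hf.clm_apply (differentiableAt_const w)), fderiv_clm_apply hf (differentiableAt_const w)]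
  simp

end Slices

section KernelCalculus

variable {d : ℕ} {C : Euc d → Euc d → ℝ}

theorem pd1_eq_fderiv_uncurry (hC : Differentiable ℝ (uncurry C)) (i : Fin d) (x y : Euc d) :
    pd1 C i x y = fderiv ℝ (uncurry C) (x, y) (EuclideanSpace.single i 1, 0) :=
  fderiv_comp_prodMk_left_apply (hC _) _

theorem pdv_eq_fderiv_uncurry (hC : Differentiable ℝ (uncurry C)) (j : Fin d) (x y : Euc d) :
    pdv (C x) j y = fderiv ℝ (uncurry C) (x, y) (0, EuclideanSpace.single j 1) :=
  fderiv_comp_prodMk_right_apply (hC _) _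

theorem ContDiff.uncurry_pd1 {m n : WithTop ℕ∞} (hC : ContDiff ℝ n (uncurry C))
    (hmn : m + 1 ≤ n) (i : Fin d) : ContDiff ℝ m (uncurry (pd1 C i)) := by
  have hD : Differentiable ℝ (uncurry C) :=
    (hC.of_le (le_add_self.trans hmn)).differentiable one_ne_zero
  rw [show uncurry (pd1 C i) = fun p => fderiv ℝ (uncurry C) p (EuclideanSpace.single i 1, 0) from
    funext fun p => pd1_eq_fderiv_uncurry hD i p.1 p.2]
  exact (hC.fderiv_right hmn).clm_apply contDiff_const

theorem ContDiff.uncurry_pdv {m n : WithTop ℕ∞} (hC : ContDiff ℝ n (uncurry C))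
    (hmn : m + 1 ≤ n) (j : Fin d) : ContDiff ℝ m (uncurry fun x => pdv (C x) j) := by
  have hD : Differentiable ℝ (uncurry C) :=
    (hC.of_le (le_add_self.trans hmn)).differentiable one_ne_zero
  rw [show (uncurry fun x => pdv (C x) j) =
      fun p => fderiv ℝ (uncurry C) p (0, EuclideanSpace.single j 1) from
    funext fun p => pdv_eq_fderiv_uncurry hD j p.1 p.2]
  exact (hC.fderiv_right hmn).clm_apply contDiff_const

theorem ContDiff.uncurry_apply {n : WithTop ℕ∞} (hC : ContDiff ℝ n (uncurry C)) (x : Euc d) :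
    ContDiff ℝ n (C x) :=
  hC.comp (contDiff_const.prodMk contDiff_id)

theorem pd12_eq_pdv_pd1 (hC : ContDiff ℝ 2 (uncurry C)) (i j : Fin d) (x y : Euc d) :
    pd12 C i j x y = pdv (pd1 C i x) j y := by
  have hD : Differentiable ℝ (uncurry C) := hC.differentiable two_ne_zero
  have hDD : Differentiable ℝ (fderiv ℝ (uncurry C)) :=
    (hC.fderiv_right (m := 1) le_rfl).differentiable one_ne_zero
  calc pd12 C i j x y
      = pdv (fun x' => fderiv ℝ (uncurry C) (x', y) (0, EuclideanSpace.single j 1)) i x := by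
        simp only [pd12, pdv_eq_fderiv_uncurry hD]
    _ = fderiv ℝ (fderiv ℝ (uncurry C)) (x, y) (EuclideanSpace.single i 1, 0)
          (0, EuclideanSpace.single j 1) :=
        fderiv_fderiv_comp_prodMk_left_apply (hDD _) _ _
    _ = fderiv ℝ (fderiv ℝ (uncurry C)) (x, y) (0, EuclideanSpace.single j 1)
          (EuclideanSpace.single i 1, 0) :=
        hC.contDiffAt.isSymmSndFDerivAt (by simp) _ _
    _ = pdv (pd1 C i x) j y := by
        rw [pdv, funext (pd1_eq_fderiv_uncurry hD i x),
          fderiv_fderiv_comp_prodMk_right_apply (hDD _)]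

theorem hess_pd1 (hC : ContDiff ℝ 3 (uncurry C)) (a : Fin d) (x y : Euc d) :
    hess (pd1 C a x) y = pd1hess2 C a x y := by
  ext i j
  calc hess (pd1 C a x) y i j = pdv (fun w => pd12 C a j x w) i y := by
        simp only [hess, pd12_eq_pdv_pd1 (hC.of_le (by norm_num))]
    _ = pd1hess2 C a x y i j := (pd12_eq_pdv_pd1 (hC.uncurry_pdv (by norm_num) j) a i x y).symm

variable (hsymm : ∀ x y, C x y = C y x)
include hsymm

theorem pdv_eq_pd1_of_symm (j : Fin d) (x y : Euc d) : pdv (C x) j y = pd1 C j y x := by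
  rw [pd1]
  exact congrArg (pdv · j y) (funext (hsymm x))

theorem pdv_pd1_eq_pd12_of_symm (a j : Fin d) (x w : Euc d) :
    pdv (pd1 C a x) j w = pd12 C j a w x := by
  simp only [pd12, pdv_eq_pd1_of_symm hsymm]

end KernelCalculus

section LinearCombinations

variable {d : ℕ} {ι : Type*} [Fintype ι]

theorem pdv_const_mul (c : ℝ) (f : Euc d → ℝ) (j : Fin d) (w : Euc d) :
    pdv (fun z => c * f z) j w = c * pdv f j w := by
  show fderiv ℝ (c • f) w _ = _
  rw [fderiv_const_smul_field]
  rfl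

theorem hess_const_mul (c : ℝ) (f : Euc d → ℝ) (w : Euc d) :
    hess (fun z => c * f z) w = c • hess f w := by
  ext i j
  simp only [hess, pdv_const_mul, Matrix.smul_apply, smul_eq_mul]

theorem pdv_sum_mul (c : ι → ℝ) {g : ι → Euc d → ℝ} {w : Euc d}
    (hg : ∀ r, DifferentiableAt ℝ (g r) w) (j : Fin d) :
    pdv (fun z => ∑ r, c r * g r z) j w = ∑ r, c r * pdv (g r) j w := by
  simp only [pdv]
  rw [fderiv_fun_sum fun r _ => (hg r).const_mul (c r), sum_apply]
  exact Finset.sum_congr rfl fun r _ => pdv_const_mul (c r) (g r) j w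

theorem ContDiff.pdv {m n : WithTop ℕ∞} {f : Euc d → ℝ} (hf : ContDiff ℝ n f) (hmn : m + 1 ≤ n)
    (j : Fin d) : ContDiff ℝ m (pdv f j) :=
  (hf.fderiv_right hmn).clm_apply contDiff_const

theorem hess_sum_mul (c : ι → ℝ) {g : ι → Euc d → ℝ} (hg : ∀ r, ContDiff ℝ 2 (g r))
    (w : Euc d) : hess (fun z => ∑ r, c r * g r z) w = ∑ r, c r • hess (g r) w := by
  ext i j
  have hg₁ : ∀ r, Differentiable ℝ (g r) := fun r => (hg r).differentiable two_ne_zero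
  have hg₂ : ∀ r, Differentiable ℝ (pdv (g r) j) := fun r =>
    ((hg r).pdv (m := 1) le_rfl j).differentiable one_ne_zero
  simp only [hess, pdv_sum_mul c (fun r => hg₁ r _), pdv_sum_mul c (fun r => hg₂ r _),
    Matrix.sum_apply, Matrix.smul_apply, smul_eq_mul]

end LinearCombinations

section Interpolant

open Matrix

variable {d s : ℕ} {C : Euc d → Euc d → ℝ} {x : Fin s → Euc d} {v : Fin s → Fin d → ℝ}

theorem ContDiff.kerVec {n : WithTop ℕ∞} (hC : ContDiff ℝ (n + 1) (uncurry C)) (r : Idx s d) :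
    ContDiff ℝ n (fun z => kerVec C x v z r) := by
  rcases r with l | ⟨l, b⟩
  · exact (hC.uncurry_apply (x l)).of_le le_self_add
  · exact contDiff_const.mul ((hC.uncurry_pd1 le_rfl b).uncurry_apply (x l))

theorem hess_kerVec (hC : ContDiff ℝ 3 (uncurry C)) (z : Euc d) (r : Idx s d) :
    hess (fun z => kerVec C x v z r) z =
      Sum.elim (fun l => hess2 C (x l) z) (fun p => v p.1 p.2 • pd1hess2 C p.2 (x p.1) z) r := by
  rcases r with l | ⟨l, b⟩
  · rfl
  · exact (hess_const_mul _ _ z).trans (congrArg _ (hess_pd1 hC b (x l) z))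

theorem hess_interp (hC : ContDiff ℝ 3 (uncurry C)) (α : Idx s d → ℝ) (z : Euc d) :
    hess (fun z => ∑ r, α r * kerVec C x v z r) z =
      ∑ l, α (Sum.inl l) • hess2 C (x l) z +
        ∑ l, ∑ b, (α (Sum.inr (l, b)) * v l b) • pd1hess2 C b (x l) z := by
  rw [hess_sum_mul α (hC.kerVec (n := 2)) z, Fintype.sum_sum_type, Fintype.sum_prod_type]
  simp only [hess_kerVec hC, Sum.elim_inl, Sum.elim_inr, smul_smul]

variable (hsymm : ∀ x y, C x y = C y x)
include hsymm

theorem kerVec_apply_self (i : Fin s) (r : Idx s d) :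
    kerVec C x v (x i) r = kerMat C x v (Sum.inl i) r := by
  rcases r with j | ⟨l, a⟩
  · exact hsymm (x j) (x i)
  · rfl

theorem mul_pdv_kerVec_apply_self (i : Fin s) (j : Fin d) (r : Idx s d) :
    v i j * pdv (fun z => kerVec C x v z r) j (x i) = kerMat C x v (Sum.inr (i, j)) r := by
  rcases r with l | ⟨l, b⟩
  · exact congrArg _ (pdv_eq_pd1_of_symm hsymm j (x l) (x i))
  · show _ * pdv (fun z => v l b * pd1 C b (x l) z) j (x i) = _
    rw [pdv_const_mul, pdv_pd1_eq_pd12_of_symm hsymm]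
    exact (mul_assoc _ _ _).symm

theorem interp_apply_self (α : Idx s d → ℝ) (i : Fin s) :
    ∑ r, α r * kerVec C x v (x i) r = (kerMat C x v *ᵥ α) (Sum.inl i) := by
  simp only [kerVec_apply_self hsymm, mulVec, dotProduct, mul_comm]

theorem mul_pdv_interp_apply_self (hC : ContDiff ℝ 2 (uncurry C)) (α : Idx s d → ℝ) (i : Fin s)
    (j : Fin d) : v i j * pdv (fun z => ∑ r, α r * kerVec C x v z r) j (x i) =
      (kerMat C x v *ᵥ α) (Sum.inr (i, j)) := by
  rw [pdv_sum_mul α (fun r => (hC.kerVec (n := 1) r).differentiable one_ne_zero _) j,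
    Finset.mul_sum]
  simp only [mulVec, dotProduct, ← mul_pdv_kerVec_apply_self hsymm]
  exact Finset.sum_congr rfl fun r _ => by ring

end Interpolant

section Estimates

open Finset

variable {ι : Type*}

theorem Finset.sum_le_of_le_div_of_card_le {t : Finset ι} {f : ι → ℝ} {c : ℝ} {N : ℕ}
    (hc : 0 ≤ c) (ht : #t ≤ N) (hf : ∀ i ∈ t, f i ≤ c / N) : ∑ i ∈ t, f i ≤ c := by
  rcases N.eq_zero_or_pos with rfl | hN
  · simp [card_eq_zero.mp (Nat.le_zero.mp ht), hc]
  calc ∑ i ∈ t, f i ≤ #t * (c / N) := by simpa using sum_le_card_nsmul t f _ hf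
    _ ≤ N * (c / N) := by gcongr
    _ = c := mul_div_cancel₀ c (by positivity)

theorem Finset.sum_lt_of_le_div_of_card_lt {t : Finset ι} {f : ι → ℝ} {c : ℝ} {N : ℕ}
    (hc : 0 < c) (ht : #t < N) (hf : ∀ i ∈ t, f i ≤ c / N) : ∑ i ∈ t, f i < c := by
  have hN : (0 : ℝ) < N := by exact_mod_cast ht.trans_le' (Nat.zero_le _)
  calc ∑ i ∈ t, f i ≤ #t * (c / N) := by simpa using sum_le_card_nsmul t f _ hf
    _ < N * (c / N) := by gcongr
    _ = c := mul_div_cancel₀ c hN.ne'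

theorem Fintype.sum_le_add_of_le_div [Fintype ι] [DecidableEq ι] {f : ι → ℝ} {A H : ℝ} {N : ℕ}
    (i : ι) (hN : Fintype.card ι ≤ N) (hH : 0 ≤ H) (hi : f i ≤ A) (hoff : ∀ j ≠ i, f j ≤ H / N) :
    ∑ j, f j ≤ A + H := by
  rw [← add_sum_erase _ _ (mem_univ i)]
  exact add_le_add hi (sum_le_of_le_div_of_card_le hH (card_erase_le.trans hN)
    fun j hj => hoff j (ne_of_mem_erase hj))

theorem Seminorm.half_le_map_sub {E : Type*} [AddCommGroup E] [Module ℝ E] (p : Seminorm ℝ E)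
    {a b z : E} {Δ : ℝ} (hab : Δ ≤ p (a - b)) (hz : p (z - b) ≤ Δ / 2) : Δ / 2 ≤ p (a - z) := by
  have := map_add_le_add p (a - z) (z - b)
  rw [sub_add_sub_cancel] at this
  linarith

/-- Of `Δ`-separated points, at most one lies within `Δ / 2` of `z`. -/
theorem sum_lt_add_of_separated {E : Type*} [AddCommGroup E] [Module ℝ E] (p : Seminorm ℝ E)
    {s N : ℕ} {x : Fin s → E} {Δ : ℝ} (hsep : ∀ i j, i ≠ j → Δ ≤ p (x i - x j)) (hs : s ≤ N)
    (z : E) {g : Fin s → ℝ} {c e : ℝ} (hc : 0 < c) (he : 0 < e) (hnear : ∀ l, g l ≤ c)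
    (hfar : ∀ l, Δ / 2 ≤ p (x l - z) → g l ≤ e / N) : ∑ l, g l < c + e := by
  by_cases h : ∃ l₀, p (z - x l₀) ≤ Δ / 2
  · obtain ⟨l₀, hl₀⟩ := h
    rw [← add_sum_erase _ _ (mem_univ l₀)]
    have hcard : #(univ.erase l₀) < N := (card_erase_lt_of_mem (mem_univ l₀)).trans_le (by simpa)
    have := sum_lt_of_le_div_of_card_lt he hcard fun l hl =>
      hfar l (p.half_le_map_sub (hsep l l₀ (ne_of_mem_erase hl)) hl₀)
    linarith [hnear l₀]
  · push Not at h
    have := sum_le_of_le_div_of_card_le he.le (t := univ) (by simpa) fun l _ =>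
      hfar l (by rw [map_sub_rev]; exact (h l).le)
    linarith

theorem abs_mul_le_of_abs_le {a b A B : ℝ} (ha : |a| ≤ A) (hb : |b| ≤ B) (hA : 0 ≤ A) :
    |a * b| ≤ A * B := by
  rw [abs_mul]
  exact mul_le_mul ha hb (abs_nonneg b) hA

theorem abs_sum_mul_le_mul_sum_abs [Fintype ι] {f g : ι → ℝ} {B : ℝ} (hf : ∀ i, |f i| ≤ B) :
    |∑ i, f i * g i| ≤ B * ∑ i, |g i| := by
  rw [mul_sum]
  refine (abs_sum_le_sum_abs _ _).trans (sum_le_sum fun i _ => ?_)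
  rw [abs_mul]
  exact mul_le_mul_of_nonneg_right (hf i) (abs_nonneg _)

theorem one_sub_le_mul_of_abs_sub_le {σ y t : ℝ} (hσ : |σ| = 1) (h : |y - σ| ≤ t) :
    1 - t ≤ σ * y := by
  have hσσ : σ * σ = 1 := by rw [← abs_mul_abs_self, hσ, one_mul]
  have := neg_abs_le (σ * (y - σ))
  rw [abs_mul, hσ, one_mul] at this
  linear_combination this + h - hσσ

theorem abs_inv_sqrt_le_inv_sqrt {c t : ℝ} (hc : 0 < c) (ht : c ≤ t) : |(√t)⁻¹| ≤ (√c)⁻¹ := by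
  rw [abs_of_nonneg (by positivity)]
  exact inv_anti₀ (Real.sqrt_pos.2 hc) (Real.sqrt_le_sqrt ht)

theorem inv_sqrt_mul_inv_sqrt_mul_self {t : ℝ} (ht : 0 < t) : (√t)⁻¹ * (√t)⁻¹ * t = 1 := by
  rw [← mul_inv, Real.mul_self_sqrt ht.le]
  exact inv_mul_cancel₀ ht.ne'

variable {d : ℕ}

theorem sum_abs_le_sqrt_card_mul_sqrt_sum_sq (t : Fin d → ℝ) :
    ∑ b, |t b| ≤ √d * √(∑ b, t b ^ 2) := by
  have h := sq_sum_le_card_mul_sum_sq (s := univ) (f := fun b => |t b|)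
  simp only [sq_abs, card_univ, Fintype.card_fin] at h
  rw [← Real.sqrt_mul (Nat.cast_nonneg d)]
  exact Real.le_sqrt_of_sq_le h

theorem EuclideanSpace.norm_le_sqrt_card_mul (w : Euc d) {M : ℝ} (hM : 0 ≤ M)
    (h : ∀ b, |w b| ≤ M) : ‖w‖ ≤ √d * M := by
  rw [EuclideanSpace.norm_eq, ← Real.sqrt_sq hM, ← Real.sqrt_mul (Nat.cast_nonneg d)]
  refine Real.sqrt_le_sqrt ?_
  calc ∑ b, ‖w b‖ ^ 2 ≤ ∑ _b : Fin d, M ^ 2 := sum_le_sum fun b _ => by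
        rw [Real.norm_eq_abs]
        exact pow_le_pow_left₀ (abs_nonneg _) (h b) 2
    _ = d * M ^ 2 := by simp

theorem abs_dotProduct_mulVec_le_specNorm (A : Matrix (Fin d) (Fin d) ℝ) (u : Euc d) :
    |dotProduct (⇑u) (A.mulVec ⇑u)| ≤ specNorm A * ‖u‖ ^ 2 := by
  have h : dotProduct (⇑u) (A.mulVec ⇑u) = inner ℝ u (Matrix.toEuclideanLin A u) := by
    simp [dotProduct, Matrix.toLpLin_apply, PiLp.inner_apply, mul_comm]
  calc |dotProduct (⇑u) (A.mulVec ⇑u)| ≤ ‖u‖ * ‖Matrix.toEuclideanLin A u‖ :=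
        h ▸ abs_real_inner_le_norm _ _
    _ ≤ ‖u‖ * (specNorm A * ‖u‖) :=
        mul_le_mul_of_nonneg_left
          ((LinearMap.toContinuousLinearMap (Matrix.toEuclideanLin A)).le_opNorm u) (norm_nonneg u)
    _ = specNorm A * ‖u‖ ^ 2 := by ring

end Estimates
section BlockDominance

open Matrix

attribute [local instance] Matrix.linftyOpNormedAddCommGroup

variable {ι κ : Type*} [Fintype ι] [Fintype κ]

theorem Matrix.linfty_opNorm_le_of_sum_abs_le {A : Matrix ι κ ℝ} {σ : ℝ} (hσ : 0 ≤ σ)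
    (h : ∀ i, ∑ j, |A i j| ≤ σ) : ‖A‖ ≤ σ := by
  rw [linfty_opNorm_def, ← Real.coe_toNNReal σ hσ, NNReal.coe_le_coe]
  refine Finset.sup_le fun i _ => ?_
  rw [← NNReal.coe_le_coe, Real.coe_toNNReal σ hσ, NNReal.coe_sum]
  simpa using h i

variable [DecidableEq ι] [DecidableEq κ]

/-- `‖·‖` is the `ℓ^∞` operator norm, i.e. the maximal absolute row sum. -/
structure Matrix.BlockDominant (M : Matrix (ι ⊕ κ) (ι ⊕ κ) ℝ) (ρ σ τ δ δ' : ℝ) : Prop where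
  norm_toBlocks₁₁_sub_one_le : ‖M.toBlocks₁₁ - 1‖ ≤ ρ
  norm_toBlocks₁₂_le : ‖M.toBlocks₁₂‖ ≤ σ
  norm_toBlocks₂₁_le : ‖M.toBlocks₂₁‖ ≤ τ
  norm_toBlocks₂₂_sub_one_le : ‖M.toBlocks₂₂ - 1‖ ≤ δ
  lt_one : δ < 1
  add_mul_div_le : ρ + σ * τ / (1 - δ) ≤ δ'
  lt_one' : δ' < 1

namespace Matrix.BlockDominant

variable {M : Matrix (ι ⊕ κ) (ι ⊕ κ) ℝ} {ρ σ τ δ δ' : ℝ}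

theorem norm_le_of_mulVec_eq (hM : M.BlockDominant ρ σ τ δ δ') {w : ι ⊕ κ → ℝ} {b : ι → ℝ}
    (hw : M *ᵥ w = Sum.elim b 0) {β : ℝ} (hb : ‖b‖ ≤ β) :
    ‖w ∘ Sum.inl‖ ≤ β / (1 - δ') ∧ ‖w ∘ Sum.inr‖ ≤ τ * β / ((1 - δ) * (1 - δ')) ∧
      ‖w ∘ Sum.inl - b‖ ≤ δ' * β / (1 - δ') := by
  set y := w ∘ Sum.inl
  set z := w ∘ Sum.inr
  rw [← fromBlocks_toBlocks M, fromBlocks_mulVec] at hw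
  have e₁ : y - b = -((M.toBlocks₁₁ - 1) *ᵥ y) - M.toBlocks₁₂ *ᵥ z := by
    have := congrArg (· ∘ Sum.inl) hw
    simp only [Sum.elim_comp_inl] at this
    rw [sub_mulVec, one_mulVec, ← this]
    abel
  have e₂ : z = -(M.toBlocks₂₁ *ᵥ y) - (M.toBlocks₂₂ - 1) *ᵥ z := by
    have := congrArg (· ∘ Sum.inr) hw
    simp only [Sum.elim_comp_inr] at this
    rw [sub_mulVec, one_mulVec, ← sub_eq_zero, ← this]
    abel
  have hz : ‖z‖ ≤ τ * ‖y‖ + δ * ‖z‖ := by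
    calc ‖z‖ = ‖-(M.toBlocks₂₁ *ᵥ y) - (M.toBlocks₂₂ - 1) *ᵥ z‖ := congrArg _ e₂
      _ ≤ ‖M.toBlocks₂₁‖ * ‖y‖ + ‖M.toBlocks₂₂ - 1‖ * ‖z‖ := by
          refine (norm_sub_le _ _).trans ?_
          rw [norm_neg]
          exact add_le_add (linfty_opNorm_mulVec _ _) (linfty_opNorm_mulVec _ _)
      _ ≤ τ * ‖y‖ + δ * ‖z‖ := by
          gcongr
          exacts [hM.norm_toBlocks₂₁_le, hM.norm_toBlocks₂₂_sub_one_le]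
  have hyb : ‖y - b‖ ≤ ρ * ‖y‖ + σ * ‖z‖ := by
    calc ‖y - b‖ = ‖-((M.toBlocks₁₁ - 1) *ᵥ y) - M.toBlocks₁₂ *ᵥ z‖ := congrArg _ e₁
      _ ≤ ‖M.toBlocks₁₁ - 1‖ * ‖y‖ + ‖M.toBlocks₁₂‖ * ‖z‖ := by
          refine (norm_sub_le _ _).trans ?_
          rw [norm_neg]
          exact add_le_add (linfty_opNorm_mulVec _ _) (linfty_opNorm_mulVec _ _)
      _ ≤ ρ * ‖y‖ + σ * ‖z‖ := by
          gcongr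
          exacts [hM.norm_toBlocks₁₁_sub_one_le, hM.norm_toBlocks₁₂_le]
  have hδ₀ : 0 < 1 - δ := sub_pos.mpr hM.lt_one
  have hδ'₀ : 0 < 1 - δ' := sub_pos.mpr hM.lt_one'
  have hσ : 0 ≤ σ := (norm_nonneg _).trans hM.norm_toBlocks₁₂_le
  have hz' : ‖z‖ ≤ τ * ‖y‖ / (1 - δ) := by
    rw [le_div_iff₀ hδ₀]
    linarith
  have hyb' : ‖y - b‖ ≤ δ' * ‖y‖ := by
    calc ‖y - b‖ ≤ ρ * ‖y‖ + σ * (τ * ‖y‖ / (1 - δ)) := hyb.trans (by gcongr)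
      _ = (ρ + σ * τ / (1 - δ)) * ‖y‖ := by ring
      _ ≤ δ' * ‖y‖ := by gcongr; exact hM.add_mul_div_le
  have hy : ‖y‖ ≤ β / (1 - δ') := by
    rw [le_div_iff₀ hδ'₀]
    linarith [norm_le_norm_add_norm_sub' y b]
  have hτ : 0 ≤ τ := (norm_nonneg _).trans hM.norm_toBlocks₂₁_le
  have hδ' : 0 ≤ δ' := (add_nonneg ((norm_nonneg _).trans hM.norm_toBlocks₁₁_sub_one_le)
    (by positivity)).trans hM.add_mul_div_le
  refine ⟨hy, ?_, ?_⟩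
  · calc ‖z‖ ≤ τ * (β / (1 - δ')) / (1 - δ) := hz'.trans (by gcongr)
      _ = τ * β / ((1 - δ) * (1 - δ')) := by field_simp
  · calc ‖y - b‖ ≤ δ' * (β / (1 - δ')) := hyb'.trans (by gcongr)
      _ = δ' * β / (1 - δ') := by ring

theorem isUnit_det (hM : M.BlockDominant ρ σ τ δ δ') : IsUnit M.det := by
  refine isUnit_iff_ne_zero.mpr fun hdet => ?_
  obtain ⟨w, hw, hMw⟩ := exists_mulVec_eq_zero_iff.mpr hdet
  obtain ⟨hy, hz, -⟩ := hM.norm_le_of_mulVec_eq (b := 0)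
    (hMw.trans Sum.elim_zero_zero.symm) norm_zero.le
  simp only [zero_div, mul_zero, norm_le_zero_iff] at hy hz
  exact hw (funext fun r => by rcases r with i | p; exacts [congrFun hy i, congrFun hz p])

end Matrix.BlockDominant

end BlockDominance

section KernelMatrix

open Matrix

attribute [local instance] Matrix.linftyOpNormedAddCommGroup

variable {d s N : ℕ} {C : Euc d → Euc d → ℝ} {x : Fin s → Euc d} {v : Fin s → Fin d → ℝ}
  {ν : ℝ}

theorem norm_toBlocks₁₁_kerMat_sub_one_le (hs : s ≤ N) {h0 : ℝ} (hh0 : 0 ≤ h0)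
    (hdiag : ∀ i, C (x i) (x i) = 1) (hoff : ∀ i j, i ≠ j → |C (x i) (x j)| ≤ h0 / N) :
    ‖(kerMat C x v).toBlocks₁₁ - 1‖ ≤ h0 := by
  refine linfty_opNorm_le_of_sum_abs_le hh0 fun i => ?_
  refine (Fintype.sum_le_add_of_le_div i (by simpa) hh0 ?_ fun j hj => ?_).trans (zero_add h0).le
  · simp [toBlocks₁₁, kerMat, hdiag]
  · simpa [toBlocks₁₁, kerMat, one_apply_ne' hj] using hoff i j hj.symm

theorem norm_toBlocks₁₂_kerMat_le (hs : s ≤ N) (hν : ∀ l b, |v l b| ≤ ν) (hν₀ : 0 ≤ ν)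
    {a1 h1 : ℝ} (ha1 : 0 ≤ a1) (hh1 : 0 ≤ h1) (hdiag : ∀ l b, |pd1 C b (x l) (x l)| ≤ a1)
    (hoff : ∀ l j, l ≠ j → ∀ b, |pd1 C b (x l) (x j)| ≤ h1 / N) :
    ‖(kerMat C x v).toBlocks₁₂‖ ≤ d * (ν * (a1 + h1)) := by
  refine linfty_opNorm_le_of_sum_abs_le (by positivity) fun i => ?_
  simp only [toBlocks₁₂, kerMat, of_apply]
  rw [Fintype.sum_prod_type, Finset.sum_comm]
  calc ∑ b, ∑ l, |v l b * pd1 C b (x l) (x i)| ≤ ∑ _b : Fin d, ν * (a1 + h1) :=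
        Finset.sum_le_sum fun b _ => mul_add ν a1 h1 ▸ Fintype.sum_le_add_of_le_div i
          (by simpa) (by positivity) (abs_mul_le_of_abs_le (hν i b) (hdiag i b) hν₀)
          fun l hl => (abs_mul_le_of_abs_le (hν l b) (hoff l i hl b) hν₀).trans_eq
            (mul_div_assoc _ _ _).symm
    _ = d * (ν * (a1 + h1)) := by simp

theorem norm_toBlocks₂₁_kerMat_le (hs : s ≤ N) (hν : ∀ l b, |v l b| ≤ ν) (hν₀ : 0 ≤ ν)
    {a1 h1 : ℝ} (ha1 : 0 ≤ a1) (hh1 : 0 ≤ h1) (hdiag : ∀ l b, |pd1 C b (x l) (x l)| ≤ a1)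
    (hoff : ∀ l j, l ≠ j → ∀ b, |pd1 C b (x l) (x j)| ≤ h1 / N) :
    ‖(kerMat C x v).toBlocks₂₁‖ ≤ ν * (a1 + h1) := by
  refine linfty_opNorm_le_of_sum_abs_le (by positivity) fun ⟨l, b⟩ => ?_
  simp only [toBlocks₂₁, kerMat, of_apply]
  exact mul_add ν a1 h1 ▸ Fintype.sum_le_add_of_le_div l (by simpa) (by positivity)
    (abs_mul_le_of_abs_le (hν l b) (hdiag l b) hν₀)
    fun j hj => (abs_mul_le_of_abs_le (hν l b) (hoff l j hj.symm b) hν₀).trans_eq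
      (mul_div_assoc _ _ _).symm

theorem norm_toBlocks₂₂_kerMat_sub_one_le (hs : s ≤ N) (hν : ∀ l b, |v l b| ≤ ν)
    (hν₀ : 0 ≤ ν) (hvv : ∀ l b, v l b * v l b * pd12 C b b (x l) (x l) = 1) {a2 h2 : ℝ}
    (ha2 : 0 ≤ a2) (hh2 : 0 ≤ h2) (hdiag : ∀ l b b', b ≠ b' → |pd12 C b b' (x l) (x l)| ≤ a2)
    (hoff : ∀ l l', l ≠ l' → ∀ b, ∑ b', |pd12 C b b' (x l) (x l')| ≤ h2 / N) :
    ‖(kerMat C x v).toBlocks₂₂ - 1‖ ≤ ν ^ 2 * (d * a2 + h2) := by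
  have hvv' : ∀ l b l' b' t K, |t| ≤ K → |v l b * v l' b' * t| ≤ ν ^ 2 * K :=
    fun l b l' b' t K h => (abs_mul_le_of_abs_le (abs_mul_le_of_abs_le (hν l b) (hν l' b') hν₀) h
      (by positivity)).trans_eq (by ring)
  refine linfty_opNorm_le_of_sum_abs_le (by positivity) fun ⟨l, b⟩ => ?_
  rw [Fintype.sum_prod_type, mul_add, mul_left_comm]
  refine Fintype.sum_le_add_of_le_div l (by simpa) (by positivity) ?_ fun l' hl' => ?_
  · calc ∑ b', |((kerMat C x v).toBlocks₂₂ - 1) (l, b) (l, b')| ≤ ∑ _b' : Fin d, ν ^ 2 * a2 :=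
          Finset.sum_le_sum fun b' _ => ?_
      _ = d * (ν ^ 2 * a2) := by simp
    rcases eq_or_ne b b' with rfl | hb
    · simp [toBlocks₂₂, kerMat, hvv]
      positivity
    · simpa [toBlocks₂₂, kerMat, one_apply_ne, hb] using hvv' l b l b' _ _ (hdiag l b b' hb)
  · calc ∑ b', |((kerMat C x v).toBlocks₂₂ - 1) (l, b) (l', b')|
        ≤ ∑ b', ν ^ 2 * |pd12 C b b' (x l) (x l')| := Finset.sum_le_sum fun b' _ => by
          simpa [toBlocks₂₂, kerMat, one_apply_ne, hl'.symm] using hvv' l b l' b' _ _ le_rfl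
      _ ≤ ν ^ 2 * h2 / N := by
          rw [← Finset.mul_sum, mul_div_assoc]
          exact mul_le_mul_of_nonneg_left (hoff l l' hl'.symm b) (by positivity)

end KernelMatrix

section InterpolantBounds

open Matrix

variable {d s N : ℕ} {C : Euc d → Euc d → ℝ} {x : Fin s → Euc d} {v : Fin s → Fin d → ℝ}
  {α : Idx s d → ℝ}

theorem abs_interp_lt (p : Seminorm ℝ (Euc d)) {Δ : ℝ}
    (hsep : ∀ i j, i ≠ j → Δ ≤ p (x i - x j)) (hs : s ≤ N) (z : Euc d) {B₁ γ c0 c1 e0 e1 : ℝ}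
    (hα₁ : ∀ l, |α (Sum.inl l)| ≤ B₁) (hB₁ : 0 < B₁)
    (hαv : ∀ l b, |α (Sum.inr (l, b)) * v l b| ≤ γ) (hγ : 0 ≤ γ)
    (hc0 : 0 < c0) (he0 : 0 < e0) (hc1 : 0 < c1) (he1 : 0 < e1)
    (hfar0 : ∀ l, |C (x l) z| ≤ c0) (hhalf0 : ∀ l, Δ / 2 ≤ p (x l - z) → |C (x l) z| ≤ e0 / N)
    (hfar1 : ∀ l, √(∑ b, pd1 C b (x l) z ^ 2) ≤ c1)
    (hhalf1 : ∀ l, Δ / 2 ≤ p (x l - z) → √(∑ b, pd1 C b (x l) z ^ 2) ≤ e1 / N) :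
    |∑ r, α r * kerVec C x v z r| < B₁ * (c0 + e0) + √d * γ * (c1 + e1) := by
  have hsplit : ∑ r, α r * kerVec C x v z r = ∑ l, α (Sum.inl l) * C (x l) z +
      ∑ p : Fin s × Fin d, α (Sum.inr p) * v p.1 p.2 * pd1 C p.2 (x p.1) z := by
    simp only [Fintype.sum_sum_type, kerVec, Sum.elim_inl, Sum.elim_inr, mul_assoc]
  have h₁ : |∑ l, α (Sum.inl l) * C (x l) z| < B₁ * (c0 + e0) :=
    (abs_sum_mul_le_mul_sum_abs hα₁).trans_lt <| mul_lt_mul_of_pos_left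
      (sum_lt_add_of_separated p hsep hs z hc0 he0 hfar0 hhalf0) hB₁
  have h₂ : |∑ p : Fin s × Fin d, α (Sum.inr p) * v p.1 p.2 * pd1 C p.2 (x p.1) z| ≤
      √d * γ * (c1 + e1) := by
    calc _ ≤ γ * ∑ p : Fin s × Fin d, |pd1 C p.2 (x p.1) z| :=
          abs_sum_mul_le_mul_sum_abs fun p => hαv p.1 p.2
      _ ≤ γ * ∑ l, √d * √(∑ b, pd1 C b (x l) z ^ 2) := by
          rw [Fintype.sum_prod_type]
          gcongr with l
          exact sum_abs_le_sqrt_card_mul_sqrt_sum_sq _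
      _ ≤ √d * γ * (c1 + e1) := by
          rw [← Finset.mul_sum, ← mul_assoc, mul_comm γ]
          gcongr
          exact (sum_lt_add_of_separated p hsep hs z hc1 he1 hfar1 hhalf1).le
  rw [hsplit]
  exact (abs_add_le _ _).trans_lt (by linarith)

end InterpolantBounds

section Curvature

open Matrix

variable {d s N : ℕ} {C : Euc d → Euc d → ℝ} {x : Fin s → Euc d} {v : Fin s → Fin d → ℝ}
  {α : Idx s d → ℝ}

theorem dotProduct_hess_interp_mulVec (hC : ContDiff ℝ 3 (uncurry C)) (z u : Euc d) :
    ⇑u ⬝ᵥ hess (fun z => ∑ r, α r * kerVec C x v z r) z *ᵥ ⇑u =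
      ∑ l, α (Sum.inl l) * (⇑u ⬝ᵥ hess2 C (x l) z *ᵥ ⇑u) +
        ∑ l, ⇑u ⬝ᵥ (∑ b, (WithLp.toLp 2 fun b => α (Sum.inr (l, b)) * v l b) b •
          pd1hess2 C b (x l) z) *ᵥ ⇑u := by
  rw [hess_interp hC]
  simp [add_mulVec, sum_mulVec, smul_mulVec, dotProduct_add, dotProduct_sum,
    dotProduct_smul]

theorem sum_abs_dotProduct_mulVec_le (hs : s ≤ N) (i : Fin s) (z u : Euc d) {w : Fin s → Euc d}
    {W b3 e3 : ℝ} (hw : ∀ l, ‖w l‖ ≤ W) (hb3 : 0 ≤ b3) (he3 : 0 ≤ e3)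
    (hnear3 : ∀ w : Euc d, specNorm (∑ k, w k • pd1hess2 C k (x i) z) ≤ b3 * ‖w‖)
    (hhalf3 : ∀ l ≠ i, ∀ w : Euc d, specNorm (∑ k, w k • pd1hess2 C k (x l) z) ≤ e3 / N * ‖w‖) :
    ∑ l, |⇑u ⬝ᵥ (∑ b, w l b • pd1hess2 C b (x l) z) *ᵥ ⇑u| ≤ (b3 + e3) * W * ‖u‖ ^ 2 := by
  have hW : 0 ≤ W := (norm_nonneg _).trans (hw i)
  rw [add_mul, add_mul]
  refine Fintype.sum_le_add_of_le_div i (by simpa) (by positivity) ?_ fun l hl => ?_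
  · refine (abs_dotProduct_mulVec_le_specNorm _ u).trans ?_
    gcongr
    exact (hnear3 (w i)).trans (by gcongr; exact hw i)
  · refine (abs_dotProduct_mulVec_le_specNorm _ u).trans ?_
    calc _ ≤ e3 / N * W * ‖u‖ ^ 2 := by
          gcongr
          exact (hhalf3 l hl (w l)).trans (by gcongr; exact hw l)
      _ = e3 * W * ‖u‖ ^ 2 / N := by ring

theorem lt_neg_mul_dotProduct_hess_interp_mulVec (hC : ContDiff ℝ 3 (uncurry C)) (hs : s ≤ N)
    {i : Fin s} {z u : Euc d} (hu : u ≠ 0) {σ κ B₁ γ lam b3 e2 e3 : ℝ} (hσ : |σ| = 1)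
    (hκ : 0 ≤ κ) (hσα : κ ≤ σ * α (Sum.inl i)) (hα₁ : ∀ l, |α (Sum.inl l)| ≤ B₁) (hB₁ : 0 < B₁)
    (hαv : ∀ l b, |α (Sum.inr (l, b)) * v l b| ≤ γ) (hγ : 0 ≤ γ) (hlam : 0 ≤ lam)
    (hb3 : 0 ≤ b3) (he2 : 0 < e2) (he3 : 0 ≤ e3)
    (hnear2 : ⇑u ⬝ᵥ hess2 C (x i) z *ᵥ ⇑u ≤ -lam * ‖u‖ ^ 2)
    (hnear3 : ∀ w : Euc d, specNorm (∑ k, w k • pd1hess2 C k (x i) z) ≤ b3 * ‖w‖)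
    (hhalf2 : ∀ l ≠ i, specNorm (hess2 C (x l) z) ≤ e2 / N)
    (hhalf3 : ∀ l ≠ i, ∀ w : Euc d, specNorm (∑ k, w k • pd1hess2 C k (x l) z) ≤ e3 / N * ‖w‖) :
    (κ * lam - B₁ * e2 - (b3 + e3) * (√d * γ)) * ‖u‖ ^ 2 <
      -σ * (⇑u ⬝ᵥ hess (fun z => ∑ r, α r * kerVec C x v z r) z *ᵥ ⇑u) := by
  have hu2 : 0 < ‖u‖ ^ 2 := by positivity
  have hT := sum_abs_dotProduct_mulVec_le hs i z u
    (w := fun l => WithLp.toLp 2 fun b => α (Sum.inr (l, b)) * v l b)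
    (fun l => EuclideanSpace.norm_le_sqrt_card_mul _ hγ fun b => hαv l b) hb3 he3 hnear3 hhalf3
  have hH : |∑ l ∈ Finset.univ.erase i, α (Sum.inl l) * (⇑u ⬝ᵥ hess2 C (x l) z *ᵥ ⇑u)| <
      B₁ * e2 * ‖u‖ ^ 2 := by
    refine (Finset.abs_sum_le_sum_abs _ _).trans_lt <| Finset.sum_lt_of_le_div_of_card_lt
      (by positivity) ((Finset.card_erase_lt_of_mem (Finset.mem_univ i)).trans_le (by simpa))
      fun l hl => ?_
    calc _ ≤ B₁ * (e2 / N * ‖u‖ ^ 2) := by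
          rw [abs_mul]
          refine mul_le_mul (hα₁ l) ((abs_dotProduct_mulVec_le_specNorm _ u).trans ?_)
            (abs_nonneg _) hB₁.le
          gcongr
          exact hhalf2 l (Finset.ne_of_mem_erase hl)
      _ = B₁ * e2 * ‖u‖ ^ 2 / N := by ring
  have hi : κ * (lam * ‖u‖ ^ 2) ≤ σ * α (Sum.inl i) * -(⇑u ⬝ᵥ hess2 C (x i) z *ᵥ ⇑u) :=
    mul_le_mul hσα (by linarith) (by positivity) (hκ.trans hσα)
  have hσt : ∀ t, σ * t ≤ |t| := fun t => (le_abs_self _).trans_eq (by rw [abs_mul, hσ, one_mul])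
  rw [dotProduct_hess_interp_mulVec hC, ← Finset.add_sum_erase _ _ (Finset.mem_univ i)]
  have h₂ := (hσt _).trans ((Finset.abs_sum_le_sum_abs _ _).trans hT)
  generalize ∑ l ∈ Finset.univ.erase i, α (Sum.inl l) * (⇑u ⬝ᵥ hess2 C (x l) z *ᵥ ⇑u) = S at hH ⊢
  generalize ∑ l, ⇑u ⬝ᵥ (∑ b, (WithLp.toLp 2 fun b => α (Sum.inr (l, b)) * v l b) b •
    pd1hess2 C b (x l) z) *ᵥ ⇑u = T at h₂ ⊢
  generalize ⇑u ⬝ᵥ hess2 C (x i) z *ᵥ ⇑u = Q at hi ⊢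
  calc (κ * lam - B₁ * e2 - (b3 + e3) * (√d * γ)) * ‖u‖ ^ 2
      = κ * (lam * ‖u‖ ^ 2) - B₁ * e2 * ‖u‖ ^ 2 - (b3 + e3) * (√d * γ) * ‖u‖ ^ 2 := by ring
    _ < σ * α (Sum.inl i) * -Q + -(σ * S) + -(σ * T) := by linarith [hσt S]
    _ = -σ * (α (Sum.inl i) * Q + S + T) := by ring

end Curvature

theorem stmt2_general (d : ℕ) (X : Set (Euc d))
    (C : Euc d → Euc d → ℝ)
    (hCsmooth : ContDiff ℝ 3 (fun p : Euc d × Euc d => C p.1 p.2))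
    (hCsymm : ∀ x y : Euc d, C x y = C y x)
    -- the separation norm
    (nsep : Seminorm ℝ (Euc d))
    (smax : ℕ)
    (εnear Δ : ℝ) (hΔ : 2 * εnear ≤ Δ)
    -- the table constants, all positive
    (a1 a2 vc b2 lam1 b3 c0 c1 e0 e1 e2 e3 h0 h1 h2 : ℝ)
    (hpos : 0 < a1 ∧ 0 < a2 ∧ 0 < vc ∧ 0 < b2 ∧ 0 < lam1 ∧ 0 < b3 ∧ 0 < c0 ∧ 0 < c1 ∧
      0 < e0 ∧ 0 < e1 ∧ 0 < e2 ∧ 0 < e3 ∧ 0 < h0 ∧ 0 < h1 ∧ 0 < h2)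
    -- Table 1, row `x = x′`
    (hdiag0 : ∀ x ∈ X, C x x = 1)
    (hdiag1 : ∀ x ∈ X, ∀ i, |pd1 C i x x| ≤ a1)
    (hdiag2 : ∀ x ∈ X, ∀ i j, i ≠ j → |pd12 C i j x x| ≤ a2)
    (hdiag2' : ∀ x ∈ X, ∀ i, vc ≤ pd12 C i i x x)
    -- Table 1, row `‖x−x′‖_sep ≤ ε_near`
    (hnear2 : ∀ x ∈ X, ∀ y ∈ X, nsep (x - y) ≤ εnear → ∀ u : Euc d,
      (-b2) * ‖u‖ ^ 2 ≤ dotProduct (⇑u) ((hess2 C x y).mulVec ⇑u) ∧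
      dotProduct (⇑u) ((hess2 C x y).mulVec ⇑u) ≤ (-lam1) * ‖u‖ ^ 2)
    (hnear3 : ∀ x ∈ X, ∀ y ∈ X, nsep (x - y) ≤ εnear → ∀ u : Euc d,
      specNorm (∑ k, u k • pd1hess2 C k x y) ≤ b3 * ‖u‖)
    -- Table 1, row `‖x−x′‖_sep ≥ ε_near`
    (hfar0 : ∀ x ∈ X, ∀ y ∈ X, εnear ≤ nsep (x - y) → |C x y| ≤ c0)
    (hfar1 : ∀ x ∈ X, ∀ y ∈ X, εnear ≤ nsep (x - y) →
      Real.sqrt (∑ i, (pd1 C i x y) ^ 2) ≤ c1)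
    -- Table 1, row `‖x−x′‖_sep ≥ Δ/2`
    (hhalf0 : ∀ x ∈ X, ∀ y ∈ X, Δ / 2 ≤ nsep (x - y) → |C x y| ≤ e0 / smax)
    (hhalf1 : ∀ x ∈ X, ∀ y ∈ X, Δ / 2 ≤ nsep (x - y) →
      Real.sqrt (∑ i, (pd1 C i x y) ^ 2) ≤ e1 / smax)
    (hhalf2 : ∀ x ∈ X, ∀ y ∈ X, Δ / 2 ≤ nsep (x - y) →
      specNorm (hess2 C x y) ≤ e2 / smax)
    (hhalf3 : ∀ x ∈ X, ∀ y ∈ X, Δ / 2 ≤ nsep (x - y) → ∀ u : Euc d,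
      specNorm (∑ k, u k • pd1hess2 C k x y) ≤ (e3 / smax) * ‖u‖)
    -- Table 1, row `‖x−x′‖_sep ≥ Δ`
    (hfull0 : ∀ x ∈ X, ∀ y ∈ X, Δ ≤ nsep (x - y) → |C x y| ≤ h0 / smax)
    (hfull1 : ∀ x ∈ X, ∀ y ∈ X, Δ ≤ nsep (x - y) → ∀ i, |pd1 C i x y| ≤ h1 / smax)
    (hfull2 : ∀ x ∈ X, ∀ y ∈ X, Δ ≤ nsep (x - y) → ∀ i,
      ∑ j, |pd12 C i j x y| ≤ h2 / smax)
    -- conditions (1)–(4), with `u = (a₁ + h₁)/√v`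
    (δ δ' : ℝ) (hδ : δ < 1) (hδ' : δ' < 1)
    (hcond1 : vc⁻¹ * (d * a2 + h2) ≤ δ)
    (hcond1' : h0 + d * ((a1 + h1) / Real.sqrt vc) ^ 2 / (1 - δ) ≤ δ')
    (εη lamEta : ℝ)
    (hεη : εη = 1 - ((c0 + e0) / (1 - δ')
      + ((a1 + h1) / Real.sqrt vc) * Real.sqrt d * (c1 + e1)
          / (Real.sqrt vc * (1 - δ) * (1 - δ'))))
    (hlamEta : lamEta = (1 - δ' / (1 - δ')) * lam1 - e2 / (1 - δ')
      - ((a1 + h1) / Real.sqrt vc) * Real.sqrt d * (b3 + e3)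
          / (Real.sqrt vc * (1 - δ) * (1 - δ')))
    (hlamEtapos : 0 < lamEta) :
    ∀ s : ℕ, s ≤ smax → ∀ a : Fin s → ℝ, (∀ i, a i ≠ 0) →
    ∀ x : Fin s → Euc d, (∀ i, x i ∈ X) →
    (∀ i j, i ≠ j → Δ ≤ nsep (x i - x j)) →
    ∀ v : Fin s → Fin d → ℝ,
      (∀ l j, v l j = (Real.sqrt (pd12 C j j (x l) (x l)))⁻¹) →
    ∀ η : Euc d → ℝ,
      (η = fun z => ∑ l, ((kerMat C x v)⁻¹.mulVec (signVec a)) l * kerVec C x v z l) →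
    IsUnit (kerMat C x v).det ∧
    (∀ i, η (x i) = Real.sign (a i)) ∧
    (∀ i j, pdv η j (x i) = 0) ∧
    (∀ z ∈ X, (∀ i, εnear ≤ nsep (z - x i)) → |η z| < 1 - εη) ∧
    (∀ i, ∀ z ∈ X, nsep (z - x i) ≤ εnear → ∀ u : Euc d, u ≠ 0 →
      lamEta * ‖u‖ ^ 2 <
        (-Real.sign (a i)) * dotProduct (⇑u) ((hess η z).mulVec ⇑u)) := by
  intro s hs a ha x hX hsep v hv η hη
  subst hη
  obtain ⟨ha1, ha2, hvc, -, hlam1, hb3, hc0, hc1, he0, he1, he2, he3, hh0, hh1, hh2⟩ := hpos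
  have hδ₀ : 0 < 1 - δ := sub_pos.2 hδ
  have hδ'₀ : 0 < 1 - δ' := sub_pos.2 hδ'
  have hν : ∀ l j, |v l j| ≤ (√vc)⁻¹ := fun l j =>
    hv l j ▸ abs_inv_sqrt_le_inv_sqrt hvc (hdiag2' _ (hX l) j)
  have hvv : ∀ l j, v l j * v l j * pd12 C j j (x l) (x l) = 1 := fun l j =>
    hv l j ▸ inv_sqrt_mul_inv_sqrt_mul_self (hvc.trans_le (hdiag2' _ (hX l) j))
  have hdom : (kerMat C x v).BlockDominant h0 (d * ((√vc)⁻¹ * (a1 + h1))) ((√vc)⁻¹ * (a1 + h1))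
      δ δ' := by
    refine ⟨norm_toBlocks₁₁_kerMat_sub_one_le hs hh0.le (fun i => hdiag0 _ (hX i))
      (fun i j hij => hfull0 _ (hX i) _ (hX j) (hsep i j hij)),
      norm_toBlocks₁₂_kerMat_le hs hν (by positivity) ha1.le hh1.le (fun l b => hdiag1 _ (hX l) b)
        (fun l j hlj => hfull1 _ (hX l) _ (hX j) (hsep l j hlj)),
      norm_toBlocks₂₁_kerMat_le hs hν (by positivity) ha1.le hh1.le (fun l b => hdiag1 _ (hX l) b)
        (fun l j hlj => hfull1 _ (hX l) _ (hX j) (hsep l j hlj)),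
      (norm_toBlocks₂₂_kerMat_sub_one_le hs hν (by positivity) hvv ha2.le hh2.le
        (fun l b b' => hdiag2 _ (hX l) b b')
        (fun l l' hll' => hfull2 _ (hX l) _ (hX l') (hsep l l' hll'))).trans ?_, hδ, ?_, hδ'⟩
    · rwa [inv_pow, Real.sq_sqrt hvc.le]
    · convert hcond1' using 3
      ring
  have hdet := hdom.isUnit_det
  set α := (kerMat C x v)⁻¹.mulVec (signVec a)
  have hα : (kerMat C x v).mulVec α = Sum.elim (fun i => Real.sign (a i)) 0 := by
    rw [Matrix.mulVec_mulVec, Matrix.mul_nonsing_inv _ hdet, Matrix.one_mulVec]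
    rfl
  have hsign : ∀ i, |Real.sign (a i)| = 1 := fun i => by
    rcases Real.sign_apply_eq_of_ne_zero _ (ha i) with h | h <;> simp [h]
  obtain ⟨hα₁, hα₂, hα₁'⟩ := hdom.norm_le_of_mulVec_eq hα (β := 1)
    ((pi_norm_le_iff_of_nonneg zero_le_one).2 fun i => (hsign i).le)
  have hB₁ : ∀ l, |α (Sum.inl l)| ≤ 1 / (1 - δ') := fun l => (norm_le_pi_norm _ l).trans hα₁
  have hγ : ∀ l b, |α (Sum.inr (l, b)) * v l b| ≤
      (√vc)⁻¹ * (a1 + h1) * 1 / ((1 - δ) * (1 - δ')) * (√vc)⁻¹ := fun l b =>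
    abs_mul_le_of_abs_le ((norm_le_pi_norm (α ∘ Sum.inr) (l, b)).trans hα₂) (hν l b)
      (by positivity)
  refine ⟨hdet, fun i => ?_, fun i j => ?_, fun z hz hfar => ?_, fun i z hz hnear u hu => ?_⟩
  · exact (interp_apply_self hCsymm α i).trans (congrFun hα (Sum.inl i))
  · have h := mul_pdv_interp_apply_self (x := x) (v := v) hCsymm (hCsmooth.of_le (by norm_num))
      α i j
    rw [hα] at h
    refine (mul_eq_zero.1 h).resolve_left fun h0 => ?_
    simpa [h0] using hvv i j
  · have hfar' : ∀ l, εnear ≤ nsep (x l - z) := fun l => by rw [map_sub_rev]; exact hfar l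
    refine (abs_interp_lt nsep hsep hs z hB₁ (by positivity) hγ (by positivity) hc0 he0 hc1 he1
      (fun l => hfar0 _ (hX l) z hz (hfar' l)) (fun l h => hhalf0 _ (hX l) z hz h)
      (fun l => hfar1 _ (hX l) z hz (hfar' l)) (fun l h => hhalf1 _ (hX l) z hz h)).trans_eq ?_
    rw [hεη]
    field_simp
    ring
  · have hnear' : nsep (x i - z) ≤ εnear := by rw [map_sub_rev]; exact hnear
    have hhalf : ∀ l ≠ i, Δ / 2 ≤ nsep (x l - z) := fun l hl =>
      nsep.half_le_map_sub (hsep l i hl) (by linarith)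
    have hκ : 0 ≤ 1 - δ' / (1 - δ') := by
      have h₁ : 0 ≤ (a1 + h1) / √vc * √d * (b3 + e3) / (√vc * (1 - δ) * (1 - δ')) := by
        positivity
      have h₂ : 0 < e2 / (1 - δ') := by positivity
      exact (pos_of_mul_pos_left (a := 1 - δ' / (1 - δ')) (by linarith) hlam1.le).le
    have hσα := one_sub_le_mul_of_abs_sub_le (hsign i)
      ((norm_le_pi_norm (α ∘ Sum.inl - fun i => Real.sign (a i)) i).trans (mul_one δ' ▸ hα₁'))
    refine (le_of_eq ?_).trans_lt (lt_neg_mul_dotProduct_hess_interp_mulVec hCsmooth hs hu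
      (hsign i) hκ hσα hB₁ (by positivity) hγ (by positivity) hlam1.le hb3.le he2 he3.le
      (hnear2 _ (hX i) z hz hnear' u).2 (hnear3 _ (hX i) z hz hnear')
      (fun l hl => hhalf2 _ (hX l) z hz (hhalf l hl))
      (fun l hl => hhalf3 _ (hX l) z hz (hhalf l hl)))
    rw [hlamEta]
    field_simp

/-- acceptable kernels interpolate: a kernel satisfying the
quantitative bounds of Table 1 and conditions (1)–(4) admits, for any `Δ`-separated
family of at most `s_max` signed points, a nondegenerate interpolating function
`η = (Υ⁻¹u_s)ᵀ f(·)`. -/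
theorem stmt2 (d : ℕ) (X : Set (Euc d))
    (C : Euc d → Euc d → ℝ)
    (hCsmooth : ContDiff ℝ 3 (fun p : Euc d × Euc d => C p.1 p.2))
    (hCsymm : ∀ x y : Euc d, C x y = C y x)
    -- the separation norm
    (nsep : Seminorm ℝ (Euc d)) (hnsep : ∀ z : Euc d, nsep z = 0 → z = 0)
    (smax : ℕ) (hsmax : 0 < smax)
    (εnear Δ : ℝ) (hεnear : 0 < εnear) (hΔ : 2 * εnear ≤ Δ)
    -- the table constants, all positive
    (a1 a2 vc b2 lam1 b3 c0 c1 e0 e1 e2 e3 h0 h1 h2 : ℝ)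
    (hpos : 0 < a1 ∧ 0 < a2 ∧ 0 < vc ∧ 0 < b2 ∧ 0 < lam1 ∧ 0 < b3 ∧ 0 < c0 ∧ 0 < c1 ∧
      0 < e0 ∧ 0 < e1 ∧ 0 < e2 ∧ 0 < e3 ∧ 0 < h0 ∧ 0 < h1 ∧ 0 < h2)
    -- Table 1, row `x = x′`
    (hdiag0 : ∀ x ∈ X, C x x = 1)
    (hdiag1 : ∀ x ∈ X, ∀ i, |pd1 C i x x| ≤ a1)
    (hdiag2 : ∀ x ∈ X, ∀ i j, i ≠ j → |pd12 C i j x x| ≤ a2)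
    (hdiag2' : ∀ x ∈ X, ∀ i, vc ≤ pd12 C i i x x)
    -- Table 1, row `‖x−x′‖_sep ≤ ε_near`
    (hnear2 : ∀ x ∈ X, ∀ y ∈ X, nsep (x - y) ≤ εnear → ∀ u : Euc d,
      (-b2) * ‖u‖ ^ 2 ≤ dotProduct (⇑u) ((hess2 C x y).mulVec ⇑u) ∧
      dotProduct (⇑u) ((hess2 C x y).mulVec ⇑u) ≤ (-lam1) * ‖u‖ ^ 2)
    (hnear3 : ∀ x ∈ X, ∀ y ∈ X, nsep (x - y) ≤ εnear → ∀ u : Euc d,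
      specNorm (∑ k, u k • pd1hess2 C k x y) ≤ b3 * ‖u‖)
    -- Table 1, row `‖x−x′‖_sep ≥ ε_near`
    (hfar0 : ∀ x ∈ X, ∀ y ∈ X, εnear ≤ nsep (x - y) → |C x y| ≤ c0)
    (hfar1 : ∀ x ∈ X, ∀ y ∈ X, εnear ≤ nsep (x - y) →
      Real.sqrt (∑ i, (pd1 C i x y) ^ 2) ≤ c1)
    -- Table 1, row `‖x−x′‖_sep ≥ Δ/2`
    (hhalf0 : ∀ x ∈ X, ∀ y ∈ X, Δ / 2 ≤ nsep (x - y) → |C x y| ≤ e0 / smax)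
    (hhalf1 : ∀ x ∈ X, ∀ y ∈ X, Δ / 2 ≤ nsep (x - y) →
      Real.sqrt (∑ i, (pd1 C i x y) ^ 2) ≤ e1 / smax)
    (hhalf2 : ∀ x ∈ X, ∀ y ∈ X, Δ / 2 ≤ nsep (x - y) →
      specNorm (hess2 C x y) ≤ e2 / smax)
    (hhalf3 : ∀ x ∈ X, ∀ y ∈ X, Δ / 2 ≤ nsep (x - y) → ∀ u : Euc d,
      specNorm (∑ k, u k • pd1hess2 C k x y) ≤ (e3 / smax) * ‖u‖)
    -- Table 1, row `‖x−x′‖_sep ≥ Δ`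
    (hfull0 : ∀ x ∈ X, ∀ y ∈ X, Δ ≤ nsep (x - y) → |C x y| ≤ h0 / smax)
    (hfull1 : ∀ x ∈ X, ∀ y ∈ X, Δ ≤ nsep (x - y) → ∀ i, |pd1 C i x y| ≤ h1 / smax)
    (hfull2 : ∀ x ∈ X, ∀ y ∈ X, Δ ≤ nsep (x - y) → ∀ i,
      ∑ j, |pd12 C i j x y| ≤ h2 / smax)
    -- conditions (1)–(4), with `u = (a₁ + h₁)/√v`
    (δ δ' : ℝ) (hδ : δ < 1) (hδ' : δ' < 1)
    (hcond1 : vc⁻¹ * (d * a2 + h2) ≤ δ)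
    (hcond1' : h0 + d * ((a1 + h1) / Real.sqrt vc) ^ 2 / (1 - δ) ≤ δ')
    (εη lamEta : ℝ)
    (hεη : εη = 1 - ((c0 + e0) / (1 - δ')
      + ((a1 + h1) / Real.sqrt vc) * Real.sqrt d * (c1 + e1)
          / (Real.sqrt vc * (1 - δ) * (1 - δ'))))
    (hεηpos : 0 < εη)
    (hlamEta : lamEta = (1 - δ' / (1 - δ')) * lam1 - e2 / (1 - δ')
      - ((a1 + h1) / Real.sqrt vc) * Real.sqrt d * (b3 + e3)
          / (Real.sqrt vc * (1 - δ) * (1 - δ')))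
    (hlamEtapos : 0 < lamEta) :
    ∀ s : ℕ, s ≤ smax → ∀ a : Fin s → ℝ, (∀ i, a i ≠ 0) →
    ∀ x : Fin s → Euc d, (∀ i, x i ∈ X) →
    (∀ i j, i ≠ j → Δ ≤ nsep (x i - x j)) →
    ∀ v : Fin s → Fin d → ℝ,
      (∀ l j, v l j = (Real.sqrt (pd12 C j j (x l) (x l)))⁻¹) →
    ∀ η : Euc d → ℝ,
      (η = fun z => ∑ l, ((kerMat C x v)⁻¹.mulVec (signVec a)) l * kerVec C x v z l) →
    IsUnit (kerMat C x v).det ∧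
    (∀ i, η (x i) = Real.sign (a i)) ∧
    (∀ i j, pdv η j (x i) = 0) ∧
    (∀ z ∈ X, (∀ i, εnear ≤ nsep (z - x i)) → |η z| < 1 - εη) ∧
    (∀ i, ∀ z ∈ X, nsep (z - x i) ≤ εnear → ∀ u : Euc d, u ≠ 0 →
      lamEta * ‖u‖ ^ 2 <
        (-Real.sign (a i)) * dotProduct (⇑u) ((hess η z).mulVec ⇑u)) :=
  stmt2_general d X C hCsmooth hCsymm nsep smax εnear Δ hΔ a1 a2 vc b2 lam1 b3 c0 c1 e0 e1 e2 e3 h0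
    h1 h2 hpos hdiag0 hdiag1 hdiag2 hdiag2' hnear2 hnear3 hfar0 hfar1 hhalf0 hhalf1 hhalf2 hhalf3
    hfull0 hfull1 hfull2 δ δ' hδ hδ' hcond1 hcond1' εη lamEta hεη hlamEta hlamEtapos
end
end

section
/- Let Υ, Υ̂ be real symmetric s(d+1) × s(d+1) matrices with ‖Id − Υ‖ ≤ 1/2 and ‖Υ − Υ̂‖ ≤ ε for some 0 < ε ≤ 1/4, let u_s = (σ₁,…,σ_s,0,…,0)ᵀ ∈ ℝ^{s(d+1)} with σ_i ∈ {±1}, and let f : X → ℝ^{s(d+1)} be twice continuously differentiable satisfying |qᵀf(x)| ≤ B₀‖q‖₂ for all q and all x ∈ X^far, and ‖∇²(qᵀf(x))‖ ≤ B₂‖q‖₂ for all q and all x ∈ X^near. Then the function E₂(x) = (Υ⁻¹u_s − Υ̂⁻¹u_s)ᵀf(x) satisfies |E₂(x)| ≤ 8√s·ε·B₀ for all x ∈ X^far and ‖∇²E₂(x)‖ ≤ 8√s·ε·B₂ for all x ∈ X^near. -/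
open Real

noncomputable section

/-!
Since `Υ⁻¹ - Υ̂⁻¹ = Υ⁻¹ (Υ̂ - Υ) Υ̂⁻¹` and the Neumann series gives `‖Υ⁻¹‖ ≤ 2`, `‖Υ̂⁻¹‖ ≤ 4`
(as `‖1 - Υ‖ ≤ 1/2` and `‖1 - Υ̂‖ ≤ 3/4`), the coefficient vector `q = (Υ⁻¹ - Υ̂⁻¹) u_s` has
`‖q‖₂ ≤ 8 ε ‖u_s‖₂ = 8 √s ε`. Both bounds are then the kernel bounds applied to `q`.
-/

open scoped Matrix Matrix.Norms.L2Operator Ring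

section NormedRing

variable {R : Type*} [NormedRing R] [HasSummableGeomSeries R]

theorem norm_ringInverse_le (h1 : ‖(1 : R)‖ ≤ 1) {a : R} (ha : ‖1 - a‖ < 1) :
    ‖a⁻¹ʳ‖ ≤ (1 - ‖1 - a‖)⁻¹ := by
  have h := tsum_geometric_le_of_norm_lt_one (1 - a) ha
  rw [geom_series_eq_inverse _ ha, sub_sub_cancel] at h
  linarith

theorem norm_ringInverse_sub_ringInverse_le (h1 : ‖(1 : R)‖ ≤ 1) {a b : R} {α β : ℝ}
    (ha : ‖1 - a‖ ≤ α) (hα : α < 1) (hb : ‖1 - b‖ ≤ β) (hβ : β < 1) :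
    ‖a⁻¹ʳ - b⁻¹ʳ‖ ≤ ‖a - b‖ / ((1 - α) * (1 - β)) := by
  have ha1 : ‖1 - a‖ < 1 := ha.trans_lt hα
  have hb1 : ‖1 - b‖ < 1 := hb.trans_lt hβ
  have hinv_a : ‖a⁻¹ʳ‖ ≤ (1 - α)⁻¹ :=
    (norm_ringInverse_le h1 ha1).trans (by gcongr)
  have hinv_b : ‖b⁻¹ʳ‖ ≤ (1 - β)⁻¹ :=
    (norm_ringInverse_le h1 hb1).trans (by gcongr)
  have hunit : IsUnit a ↔ IsUnit b :=
    iff_of_true (sub_sub_cancel 1 a ▸ isUnit_one_sub_of_norm_lt_one ha1)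
      (sub_sub_cancel 1 b ▸ isUnit_one_sub_of_norm_lt_one hb1)
  rw [Ring.inverse_sub_inverse hunit]
  calc ‖a⁻¹ʳ * (b - a) * b⁻¹ʳ‖ ≤ ‖a⁻¹ʳ‖ * ‖a - b‖ * ‖b⁻¹ʳ‖ := by
        rw [norm_sub_rev a b]
        exact (norm_mul_le _ _).trans (by gcongr; exact norm_mul_le _ _)
    _ ≤ (1 - α)⁻¹ * ‖a - b‖ * (1 - β)⁻¹ := by gcongr
    _ = ‖a - b‖ / ((1 - α) * (1 - β)) := by field_simp

end NormedRing

namespace Matrix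

variable {n : Type*} [Fintype n] [DecidableEq n]

theorem l2_opNorm_one_le {𝕜 : Type*} [RCLike 𝕜] : ‖(1 : Matrix n n 𝕜)‖ ≤ 1 := by
  rw [← l2_opNorm_toEuclideanCLM, map_one]
  exact ContinuousLinearMap.norm_id_le

theorem l2_opNorm_inv_sub_inv_le {A B : Matrix n n ℝ} {ε : ℝ}
    (hA : ‖1 - A‖ ≤ 1 / 2) (hAB : ‖A - B‖ ≤ ε) (hε : ε ≤ 1 / 4) :
    ‖A⁻¹ - B⁻¹‖ ≤ 8 * ε := by
  have hB : ‖1 - B‖ ≤ 3 / 4 :=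
    calc ‖1 - B‖ = ‖(1 - A) + (A - B)‖ := by rw [sub_add_sub_cancel]
      _ ≤ 3 / 4 := (norm_add_le _ _).trans (by linarith)
  rw [nonsing_inv_eq_ringInverse, nonsing_inv_eq_ringInverse]
  calc ‖A⁻¹ʳ - B⁻¹ʳ‖ ≤ ‖A - B‖ / ((1 - 1 / 2) * (1 - 3 / 4)) :=
        norm_ringInverse_sub_ringInverse_le l2_opNorm_one_le hA (by norm_num) hB (by norm_num)
    _ ≤ 8 * ε := by norm_num; linarith

end Matrix

theorem EuclideanSpace.norm_toLp_real {n : Type*} [Fintype n] (v : n → ℝ) :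
    ‖WithLp.toLp 2 v‖ = √(∑ i, v i ^ 2) := by
  simp [EuclideanSpace.norm_eq]

theorem sum_sq_elim_sign_zero {ι κ : Type*} [Fintype ι] [Fintype κ] {σ : ι → ℝ}
    (hσ : ∀ i, σ i = 1 ∨ σ i = -1) :
    ∑ l, Sum.elim σ (fun _ : κ => 0) l ^ 2 = Fintype.card ι := by
  have hsq : ∀ i, σ i ^ 2 = 1 := fun i => by rcases hσ i with h | h <;> simp [h]
  simp [Fintype.sum_sum_type, hsq]

theorem stmt17_general (d s : ℕ)
    (Υ Υhat : Matrix (Idx s d) (Idx s d) ℝ)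
    (hId : specNorm (1 - Υ) ≤ 1 / 2)
    (ε : ℝ) (hε : ε ≤ 1 / 4)
    (hclose : specNorm (Υ - Υhat) ≤ ε)
    -- sign pattern and the padded sign vector `u_s`
    (σ : Fin s → ℝ) (hσ : ∀ i, σ i = 1 ∨ σ i = -1)
    (us : Idx s d → ℝ) (hus : us = Sum.elim σ (fun _ => 0))
    -- near and far regions determined by points `x_i`, a separation norm and `ε_near`
    (Xnear Xfar : Set (Euc d))
    -- the vector-valued function `f` and the kernel bounds `B₀`, `B₂`
    (f : Euc d → Idx s d → ℝ)
    (B0 B2 : ℝ) (hB0 : 0 < B0) (hB2 : 0 < B2)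
    (hfB0 : ∀ q : Idx s d → ℝ, ∀ z ∈ Xfar,
      |∑ l, q l * f z l| ≤ B0 * Real.sqrt (∑ l, (q l) ^ 2))
    (hfB2 : ∀ q : Idx s d → ℝ, ∀ z ∈ Xnear,
      specNorm (hess (fun w => ∑ l, q l * f w l) z) ≤ B2 * Real.sqrt (∑ l, (q l) ^ 2)) :
    (∀ z ∈ Xfar,
      |∑ l, (Υ⁻¹.mulVec us - Υhat⁻¹.mulVec us) l * f z l| ≤ 8 * Real.sqrt s * ε * B0) ∧
    (∀ z ∈ Xnear,
      specNorm (hess (fun w => ∑ l, (Υ⁻¹.mulVec us - Υhat⁻¹.mulVec us) l * f w l) z)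
        ≤ 8 * Real.sqrt s * ε * B2) := by
  set q : Idx s d → ℝ := Υ⁻¹ *ᵥ us - Υhat⁻¹ *ᵥ us with hq_def
  have hq : √(∑ l, q l ^ 2) ≤ 8 * √s * ε := by
    rw [← EuclideanSpace.norm_toLp_real, hq_def, ← Matrix.sub_mulVec]
    calc _ ≤ ‖Υ⁻¹ - Υhat⁻¹‖ * ‖WithLp.toLp 2 us‖ := Matrix.l2_opNorm_mulVec _ (WithLp.toLp 2 us)
      _ ≤ 8 * ε * √s := by
          rw [EuclideanSpace.norm_toLp_real, hus, sum_sq_elim_sign_zero hσ, Fintype.card_fin]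
          gcongr
          -- `specNorm` is definitionally the norm of `Matrix.Norms.L2Operator`
          exact Matrix.l2_opNorm_inv_sub_inv_le hId hclose hε
      _ = 8 * √s * ε := by ring
  refine ⟨fun z hz => ?_, fun z hz => ?_⟩
  · calc _ ≤ B0 * √(∑ l, q l ^ 2) := hfB0 _ z hz
      _ ≤ B0 * (8 * √s * ε) := by gcongr
      _ = 8 * √s * ε * B0 := by ring
  · calc _ ≤ B2 * √(∑ l, q l ^ 2) := hfB2 _ z hz
      _ ≤ B2 * (8 * √s * ε) := by gcongr
      _ = 8 * √s * ε * B2 := by ring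

/-- deterministic bound on the error term
`E₂(x) = (Υ⁻¹u_s − Υ̂⁻¹u_s)ᵀ f(x)` and its Hessian. -/
theorem stmt17 (d s : ℕ) (X : Set (Euc d))
    (Υ Υhat : Matrix (Idx s d) (Idx s d) ℝ)
    (hΥsymm : Υ.IsSymm) (hΥhatsymm : Υhat.IsSymm)
    (hId : specNorm (1 - Υ) ≤ 1 / 2)
    (ε : ℝ) (hε0 : 0 < ε) (hε : ε ≤ 1 / 4)
    (hclose : specNorm (Υ - Υhat) ≤ ε)
    -- sign pattern and the padded sign vector `u_s`
    (σ : Fin s → ℝ) (hσ : ∀ i, σ i = 1 ∨ σ i = -1)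
    (us : Idx s d → ℝ) (hus : us = Sum.elim σ (fun _ => 0))
    -- near and far regions determined by points `x_i`, a separation norm and `ε_near`
    (nsep : Seminorm ℝ (Euc d)) (hnsep : ∀ z : Euc d, nsep z = 0 → z = 0)
    (εnear : ℝ) (hεnear : 0 < εnear) (x : Fin s → Euc d)
    (Xnear Xfar : Set (Euc d))
    (hXnear : Xnear = ⋃ i, {z : Euc d | nsep (z - x i) ≤ εnear})
    (hXfar : Xfar = X \ Xnear)
    -- the vector-valued function `f` and the kernel bounds `B₀`, `B₂`
    (f : Euc d → Idx s d → ℝ) (hf : ∀ l, ContDiff ℝ 2 (fun z => f z l))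
    (B0 B2 : ℝ) (hB0 : 0 < B0) (hB2 : 0 < B2)
    (hfB0 : ∀ q : Idx s d → ℝ, ∀ z ∈ Xfar,
      |∑ l, q l * f z l| ≤ B0 * Real.sqrt (∑ l, (q l) ^ 2))
    (hfB2 : ∀ q : Idx s d → ℝ, ∀ z ∈ Xnear,
      specNorm (hess (fun w => ∑ l, q l * f w l) z) ≤ B2 * Real.sqrt (∑ l, (q l) ^ 2)) :
    (∀ z ∈ Xfar,
      |∑ l, (Υ⁻¹.mulVec us - Υhat⁻¹.mulVec us) l * f z l| ≤ 8 * Real.sqrt s * ε * B0) ∧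
    (∀ z ∈ Xnear,
      specNorm (hess (fun w => ∑ l, (Υ⁻¹.mulVec us - Υhat⁻¹.mulVec us) l * f w l) z)
        ≤ 8 * Real.sqrt s * ε * B2) :=
  stmt17_general d s Υ Υhat hId ε hε hclose σ hσ us hus Xnear Xfar f B0 B2 hB0 hB2 hfB0 hfB2
end
end

section
/- Let C(x,x′) = exp(−‖x − x′‖₂²/(2σ²)) be the Gaussian kernel on ℝ^d and write t = x − x′. Then: (a) for all x, x′ with ‖t‖₂ ≤ σ/√2, the Hessian in the second variable satisfies ‖∇₂²C(x,x′)‖ ≤ 1.3895/σ², every eigenvalue of ∇₂²C(x,x′) is at most −0.3893/σ², and for every u ∈ ℝ^d, ‖Σ_{i=1}^d u_i ∂_{1,i}∇₂²C(x,x′)‖ ≤ 2.4750·‖u‖₂/σ³; (b) for all x, x′ with ‖t‖₂ ≥ σ/√2, |C(x,x′)| ≤ 0.7789 and ‖∇₁C(x,x′)‖₂ ≤ 0.6066/σ. -/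
open Real

noncomputable section

/-! The kernel depends only on `t = x - x'`, so every derivative in the statement is a derivative
of the profile `g t = exp (-‖t‖² / (2σ²))`: `∇₂²C = g • (σ⁻⁴ t tᵀ - σ⁻² I)`,
`∑ᵢ uᵢ ∂_{1,i} ∇₂²C = g • (σ⁻⁴ (⟪t, u⟫ I + t uᵀ + u tᵀ) - σ⁻⁶ ⟪t, u⟫ t tᵀ)` and `∇₁C = -σ⁻² g t`.
Since `‖a bᵀ‖ ≤ ‖a‖ ‖b‖`, each claim becomes a one-variable inequality in `ρ = ‖t‖ / σ`:
for `ρ² ≤ 1/2`, `e^{-ρ²/2} (1 + ρ²) ≤ 5/4` (as `e^{ρ²/2} ≥ 1 + ρ²/2`),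
`e^{-ρ²/2} (1 - ρ²) ≥ e^{-1/4} / 2` and `ρ (3 + ρ²) ≤ 7 / (2√2)`; for `ρ² ≥ 1/2`,
`e^{-ρ²/2} ≤ e^{-1/4}`; and always `ρ e^{-ρ²/2} ≤ e^{-1/2}`, because `ρ ≤ e^{(ρ² - 1)/2}`. -/

open Matrix (vecMulVec)
open scoped Matrix Matrix.Norms.L2Operator

section TranslationInvariant

variable {d : ℕ}

lemma pdv_comp_sub (f : Euc d → ℝ) (i : Fin d) (a z : Euc d) :
    pdv (fun w => f (w - a)) i z = pdv f i (z - a) := by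
  rw [pdv, pdv, fderiv_comp_sub]

lemma pdv_comp_const_sub (f : Euc d → ℝ) (i : Fin d) (a z : Euc d) :
    pdv (fun w => f (a - w)) i z = -pdv f i (a - z) := by
  have hneg := (ContinuousLinearEquiv.neg ℝ : Euc d ≃L[ℝ] Euc d).comp_right_fderiv
    (f := f) (x := z - a)
  have hf : (fun w => f (a - w)) =
      fun w => (f ∘ (ContinuousLinearEquiv.neg ℝ : Euc d ≃L[ℝ] Euc d)) (w - a) := by
    funext w; simp
  rw [pdv, hf, fderiv_comp_sub, hneg]
  simp [pdv]

lemma pdv_neg (f : Euc d → ℝ) (i : Fin d) (z : Euc d) :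
    pdv (fun w => -f w) i z = -pdv f i z := by
  rw [pdv, pdv, fderiv_fun_neg]; rfl

variable (g : Euc d → ℝ) (x y : Euc d)

lemma pd1_comp_sub (i : Fin d) : pd1 (fun x y => g (x - y)) i x y = pdv g i (x - y) :=
  pdv_comp_sub g i y x

lemma hess2_comp_sub : hess2 (fun x y => g (x - y)) x y = hess g (x - y) := by
  ext i j
  simp only [hess2, hess, pdv_comp_const_sub, pdv_neg, neg_neg]

lemma pd1hess2_comp_sub_apply (k i j : Fin d) :
    pd1hess2 (fun x y => g (x - y)) k x y i j = pdv (fun t => hess g t i j) k (x - y) := by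
  simp only [pd1hess2, hess2_comp_sub]
  exact pdv_comp_sub (fun t => hess g t i j) k y x

end TranslationInvariant

section L2OpNorm

variable {ι : Type*} [Fintype ι]

lemma dotProduct_eq_inner (a b : EuclideanSpace ℝ ι) : ⇑a ⬝ᵥ ⇑b = inner ℝ a b := by
  rw [EuclideanSpace.inner_eq_star_dotProduct, star_trivial, dotProduct_comm]

lemma abs_dotProduct_le (a b : EuclideanSpace ℝ ι) : |⇑a ⬝ᵥ ⇑b| ≤ ‖a‖ * ‖b‖ :=
  dotProduct_eq_inner a b ▸ abs_real_inner_le_norm a b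

variable [DecidableEq ι]

lemma specNorm_eq_l2_opNorm (A : Matrix ι ι ℝ) : specNorm A = ‖A‖ := rfl

lemma l2_opNorm_one_le : ‖(1 : Matrix ι ι ℝ)‖ ≤ 1 := by
  rw [← Matrix.diagonal_one, Matrix.l2_opNorm_diagonal]
  exact (pi_norm_le_iff_of_nonneg zero_le_one).mpr fun _ => by simp

lemma l2_opNorm_vecMulVec_le (a b : EuclideanSpace ℝ ι) : ‖vecMulVec ⇑a ⇑b‖ ≤ ‖a‖ * ‖b‖ := by
  rw [Matrix.cstar_norm_def]
  refine ContinuousLinearMap.opNorm_le_bound _ (by positivity) fun v => ?_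
  have hv : Matrix.toEuclideanCLM (𝕜 := ℝ) (vecMulVec ⇑a ⇑b) v = (⇑b ⬝ᵥ ⇑v) • a := by
    ext i; simp [Matrix.vecMulVec_mulVec, mul_comm]
  rw [hv, norm_smul, Real.norm_eq_abs]
  calc |⇑b ⬝ᵥ ⇑v| * ‖a‖ ≤ ‖b‖ * ‖v‖ * ‖a‖ := by gcongr; exact abs_dotProduct_le b v
    _ = ‖a‖ * ‖b‖ * ‖v‖ := by ring

end L2OpNorm

section ScalarBounds

lemma exp_neg_quarter_pow_four : exp (-(1 / 4)) ^ 4 = exp (-1) := by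
  rw [← exp_nat_mul]; norm_num

lemma le_exp_neg_quarter : (0.7788 : ℝ) ≤ exp (-(1 / 4)) := by
  rw [← pow_le_pow_iff_left₀ (by norm_num) (exp_pos _).le four_ne_zero, exp_neg_quarter_pow_four]
  linarith [exp_neg_one_gt_d9]

lemma exp_neg_quarter_le : exp (-(1 / 4)) ≤ (0.7789 : ℝ) := by
  rw [← pow_le_pow_iff_left₀ (exp_pos _).le (by norm_num) four_ne_zero, exp_neg_quarter_pow_four]
  linarith [exp_neg_one_lt_d9]

lemma exp_neg_half_le : exp (-(1 / 2)) ≤ (0.6066 : ℝ) := by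
  have h : exp (-(1 / 2)) ^ 2 = exp (-1) := by rw [← exp_nat_mul]; norm_num
  rw [← pow_le_pow_iff_left₀ (exp_pos _).le (by norm_num) two_ne_zero, h]
  linarith [exp_neg_one_lt_d9]

variable {ρ : ℝ}

lemma exp_neg_sq_half_mul_one_add_sq_le (hρ : ρ ^ 2 ≤ 1 / 2) :
    exp (-ρ ^ 2 / 2) * (1 + ρ ^ 2) ≤ 1.3895 := by
  have hexp : exp (-ρ ^ 2 / 2) * (1 + ρ ^ 2 / 2) ≤ 1 := by
    calc exp (-ρ ^ 2 / 2) * (1 + ρ ^ 2 / 2) ≤ exp (-ρ ^ 2 / 2) * exp (ρ ^ 2 / 2) := by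
          gcongr; linarith [add_one_le_exp (ρ ^ 2 / 2)]
      _ = 1 := by rw [← exp_add, neg_div, neg_add_cancel, exp_zero]
  have hle : exp (-ρ ^ 2 / 2) ≤ 1 := exp_le_one_iff.mpr (by nlinarith [sq_nonneg ρ])
  nlinarith [sq_nonneg ρ]

lemma le_exp_neg_sq_half_mul_one_sub_sq (hρ : ρ ^ 2 ≤ 1 / 2) :
    0.3893 ≤ exp (-ρ ^ 2 / 2) * (1 - ρ ^ 2) := by
  have hexp : exp (-(1 / 4)) ≤ exp (-ρ ^ 2 / 2) := exp_le_exp.mpr (by linarith)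
  nlinarith [le_exp_neg_quarter, exp_pos (-(1 / 4))]

lemma mul_three_add_sq_le (hρ0 : 0 ≤ ρ) (hρ : ρ ^ 2 ≤ 1 / 2) : ρ * (3 + ρ ^ 2) ≤ 2.4750 := by
  -- `0.70714 ^ 2 > 1 / 2` and `3.5 * 0.70714 < 2.475`
  have : ρ ≤ 0.70714 := by nlinarith
  nlinarith

lemma exp_neg_sq_half_le (hρ : 1 / 2 ≤ ρ ^ 2) : exp (-ρ ^ 2 / 2) ≤ 0.7789 :=
  (exp_le_exp.mpr (by linarith)).trans exp_neg_quarter_le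

lemma mul_exp_neg_sq_half_le (ρ : ℝ) : ρ * exp (-ρ ^ 2 / 2) ≤ 0.6066 := by
  have hρ : ρ ≤ exp ((ρ ^ 2 - 1) / 2) := by
    nlinarith [add_one_le_exp ((ρ ^ 2 - 1) / 2), sq_nonneg (ρ - 1)]
  calc ρ * exp (-ρ ^ 2 / 2) ≤ exp ((ρ ^ 2 - 1) / 2) * exp (-ρ ^ 2 / 2) := by gcongr
    _ = exp (-(1 / 2)) := by rw [← exp_add]; ring_nf
    _ ≤ 0.6066 := exp_neg_half_le

end ScalarBounds

lemma le_div_sqrt_two_iff {s σ : ℝ} (hs : 0 ≤ s) (hσ : 0 < σ) :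
    s ≤ σ / √2 ↔ (s * σ⁻¹) ^ 2 ≤ 1 / 2 := by
  rw [div_eq_inv_mul, ← mul_inv_le_iff₀ hσ, ← Real.sqrt_inv, one_div,
    Real.le_sqrt (by positivity) (by norm_num)]

lemma div_sqrt_two_le_iff {s σ : ℝ} (hs : 0 ≤ s) (hσ : 0 < σ) :
    σ / √2 ≤ s ↔ 1 / 2 ≤ (s * σ⁻¹) ^ 2 := by
  rw [div_eq_inv_mul, ← le_mul_inv_iff₀ hσ, ← Real.sqrt_inv, one_div,
    Real.sqrt_le_left (by positivity)]

section Gaussian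

variable {E : Type*} [NormedAddCommGroup E]

def gaussian (σ : ℝ) (t : E) : ℝ := exp (-‖t‖ ^ 2 / (2 * σ ^ 2))

lemma gaussian_pos (σ : ℝ) (t : E) : 0 < gaussian σ t := exp_pos _

lemma gaussian_le_one (σ : ℝ) (t : E) : gaussian σ t ≤ 1 :=
  exp_le_one_iff.mpr (by rw [neg_div]; exact neg_nonpos.mpr (by positivity))

lemma gaussian_eq_exp_mul_inv (σ : ℝ) (t : E) :
    gaussian σ t = exp (-(‖t‖ * σ⁻¹) ^ 2 / 2) := by
  rw [gaussian]; ring_nf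

variable [InnerProductSpace ℝ E]

lemma hasFDerivAt_gaussian (σ : ℝ) (t : E) :
    HasFDerivAt (gaussian σ) ((-(σ⁻¹ ^ 2) * gaussian σ t) • innerSL ℝ t) t := by
  have h := (((hasFDerivAt_id t).norm_sq).const_mul (-(2 * σ ^ 2)⁻¹)).exp
  convert h using 1
  · funext w; simp only [gaussian, id]; ring_nf
  · ext v
    simp only [gaussian, smul_apply, add_apply, coe_innerSL_apply, ContinuousLinearMap.comp_id,
      two_smul, smul_eq_mul, id]
    ring_nf

end Gaussian

section GaussianDerivatives

variable {d : ℕ} (σ : ℝ)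

lemma pdv_mul_gaussian {p : Euc d → ℝ} {p' : Euc d →L[ℝ] ℝ} {t : Euc d}
    (hp : HasFDerivAt p p' t) (i : Fin d) :
    pdv (fun w => p w * gaussian σ w) i t
      = (p' (EuclideanSpace.single i 1) - σ⁻¹ ^ 2 * t i * p t) * gaussian σ t := by
  rw [pdv, (hp.fun_mul (hasFDerivAt_gaussian σ t)).fderiv]
  simp only [add_apply, smul_apply, coe_innerSL_apply, EuclideanSpace.inner_single_right,
    ringHom_apply, smul_eq_mul]
  ring

lemma pdv_gaussian (i : Fin d) (t : Euc d) :
    pdv (gaussian σ) i t = -(σ⁻¹ ^ 2 * t i) * gaussian σ t := by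
  simpa using pdv_mul_gaussian σ (hasFDerivAt_const (1 : ℝ) t) i

lemma hess_gaussian_apply (t : Euc d) (i j : Fin d) :
    hess (gaussian σ) t i j
      = (σ⁻¹ ^ 4 * t i * t j - σ⁻¹ ^ 2 * (1 : Matrix (Fin d) (Fin d) ℝ) i j) * gaussian σ t := by
  have hp : HasFDerivAt (fun w : Euc d => -(σ⁻¹ ^ 2 * w j))
      (-(σ⁻¹ ^ 2 • EuclideanSpace.proj j)) t :=
    (((EuclideanSpace.proj j : Euc d →L[ℝ] ℝ).hasFDerivAt (x := t)).const_mul (σ⁻¹ ^ 2)).neg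
  simp only [hess, pdv_gaussian, pdv_mul_gaussian σ hp, neg_apply, smul_apply, PiLp.proj_apply,
    PiLp.single_apply, Matrix.one_apply, smul_eq_mul]
  grind

lemma hess_gaussian (t : Euc d) :
    hess (gaussian σ) t = gaussian σ t • (σ⁻¹ ^ 4 • vecMulVec ⇑t ⇑t - σ⁻¹ ^ 2 • 1) := by
  ext i j
  simp only [hess_gaussian_apply, Matrix.smul_apply, Matrix.sub_apply, Matrix.vecMulVec_apply,
    smul_eq_mul]
  ring

lemma pdv_hess_gaussian_apply (t : Euc d) (k i j : Fin d) :
    pdv (fun w => hess (gaussian σ) w i j) k t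
      = (σ⁻¹ ^ 4 * ((1 : Matrix (Fin d) (Fin d) ℝ) i j * t k
            + (1 : Matrix (Fin d) (Fin d) ℝ) k j * t i + (1 : Matrix (Fin d) (Fin d) ℝ) k i * t j)
          - σ⁻¹ ^ 6 * t i * t j * t k) * gaussian σ t := by
  have hproj (l : Fin d) := (EuclideanSpace.proj l : Euc d →L[ℝ] ℝ).hasFDerivAt (x := t)
  have hp : HasFDerivAt
      (fun w : Euc d => σ⁻¹ ^ 4 * w i * w j - σ⁻¹ ^ 2 * (1 : Matrix (Fin d) (Fin d) ℝ) i j) _ t :=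
    (((hproj i).const_mul (σ⁻¹ ^ 4)).fun_mul (hproj j)).sub_const _
  simp only [hess_gaussian_apply]
  rw [pdv_mul_gaussian σ hp]
  simp only [add_apply, smul_apply, PiLp.proj_apply, PiLp.single_apply, Matrix.one_apply,
    smul_eq_mul]
  grind

lemma sum_mul_pdv_hess_gaussian_apply (t u : Euc d) (i j : Fin d) :
    ∑ k, u k * pdv (fun w => hess (gaussian σ) w i j) k t
      = gaussian σ t * (σ⁻¹ ^ 4 * ((⇑t ⬝ᵥ ⇑u) * (1 : Matrix (Fin d) (Fin d) ℝ) i j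
          + t i * u j + u i * t j) - σ⁻¹ ^ 6 * (⇑t ⬝ᵥ ⇑u) * (t i * t j)) := by
  have hk (k : Fin d) : u k * pdv (fun w => hess (gaussian σ) w i j) k t
      = σ⁻¹ ^ 4 * gaussian σ t * (1 : Matrix (Fin d) (Fin d) ℝ) i j * (t k * u k)
        + σ⁻¹ ^ 4 * gaussian σ t * t i * (if k = j then u k else 0)
        + σ⁻¹ ^ 4 * gaussian σ t * t j * (if k = i then u k else 0)
        - σ⁻¹ ^ 6 * gaussian σ t * t i * t j * (t k * u k) := by
    rw [pdv_hess_gaussian_apply]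
    simp only [Matrix.one_apply (i := k)]
    grind
  simp only [hk, Finset.sum_add_distrib, Finset.sum_sub_distrib, ← Finset.mul_sum,
    Finset.sum_ite_eq', Finset.mem_univ, if_true, dotProduct]
  ring

lemma sum_smul_pd1hess2_gaussian (x y u : Euc d) :
    ∑ k, u k • pd1hess2 (fun x y => gaussian σ (x - y)) k x y
      = gaussian σ (x - y) •
          (σ⁻¹ ^ 4 • ((⇑(x - y) ⬝ᵥ ⇑u) • 1 + vecMulVec ⇑(x - y) ⇑u + vecMulVec ⇑u ⇑(x - y))
            - (σ⁻¹ ^ 6 * (⇑(x - y) ⬝ᵥ ⇑u)) • vecMulVec ⇑(x - y) ⇑(x - y)) := by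
  ext i j
  simp only [Matrix.sum_apply, Matrix.smul_apply, smul_eq_mul, pd1hess2_comp_sub_apply,
    sum_mul_pdv_hess_gaussian_apply, Matrix.sub_apply, Matrix.add_apply, Matrix.vecMulVec_apply]

end GaussianDerivatives

section GaussianBounds

variable {d : ℕ} (σ : ℝ)

lemma l2_opNorm_hess_gaussian_le (t : Euc d) :
    ‖hess (gaussian σ) t‖ ≤ gaussian σ t * (σ⁻¹ ^ 4 * ‖t‖ ^ 2 + σ⁻¹ ^ 2) := by
  rw [hess_gaussian, norm_smul, Real.norm_eq_abs, abs_of_pos (gaussian_pos σ t)]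
  refine mul_le_mul_of_nonneg_left ?_ (gaussian_pos σ t).le
  calc ‖σ⁻¹ ^ 4 • vecMulVec ⇑t ⇑t - σ⁻¹ ^ 2 • (1 : Matrix (Fin d) (Fin d) ℝ)‖
      ≤ σ⁻¹ ^ 4 * ‖vecMulVec ⇑t ⇑t‖ + σ⁻¹ ^ 2 * ‖(1 : Matrix (Fin d) (Fin d) ℝ)‖ := by
        grw [norm_sub_le, norm_smul_of_nonneg (by positivity),
          norm_smul_of_nonneg (by positivity)]
    _ ≤ σ⁻¹ ^ 4 * (‖t‖ * ‖t‖) + σ⁻¹ ^ 2 * 1 := by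
      gcongr
      exacts [l2_opNorm_vecMulVec_le t t, l2_opNorm_one_le]
    _ = σ⁻¹ ^ 4 * ‖t‖ ^ 2 + σ⁻¹ ^ 2 := by ring

lemma dotProduct_hess_gaussian_mulVec_le (t u : Euc d) :
    ⇑u ⬝ᵥ (hess (gaussian σ) t *ᵥ ⇑u) ≤ gaussian σ t * (σ⁻¹ ^ 4 * ‖t‖ ^ 2 - σ⁻¹ ^ 2) * ‖u‖ ^ 2 := by
  have hquad : ⇑u ⬝ᵥ (hess (gaussian σ) t *ᵥ ⇑u)
      = gaussian σ t * (σ⁻¹ ^ 4 * (⇑t ⬝ᵥ ⇑u) ^ 2 - σ⁻¹ ^ 2 * (⇑u ⬝ᵥ ⇑u)) := by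
    simp only [hess_gaussian, Matrix.smul_mulVec, Matrix.sub_mulVec, Matrix.vecMulVec_mulVec,
      Matrix.one_mulVec, op_smul_eq_smul, dotProduct_smul, dotProduct_sub, smul_eq_mul,
      dotProduct_comm ⇑u ⇑t]
    ring
  have hcs : (⇑t ⬝ᵥ ⇑u) ^ 2 ≤ ‖t‖ ^ 2 * ‖u‖ ^ 2 := by
    rw [← mul_pow, ← sq_abs]
    exact pow_le_pow_left₀ (abs_nonneg _) (abs_dotProduct_le t u) 2
  calc ⇑u ⬝ᵥ (hess (gaussian σ) t *ᵥ ⇑u)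
      = gaussian σ t * (σ⁻¹ ^ 4 * (⇑t ⬝ᵥ ⇑u) ^ 2 - σ⁻¹ ^ 2 * ‖u‖ ^ 2) := by
        rw [hquad, dotProduct_eq_inner u u, real_inner_self_eq_norm_sq]
    _ ≤ gaussian σ t * (σ⁻¹ ^ 4 * (‖t‖ ^ 2 * ‖u‖ ^ 2) - σ⁻¹ ^ 2 * ‖u‖ ^ 2) :=
        mul_le_mul_of_nonneg_left (by gcongr) (gaussian_pos σ t).le
    _ = gaussian σ t * (σ⁻¹ ^ 4 * ‖t‖ ^ 2 - σ⁻¹ ^ 2) * ‖u‖ ^ 2 := by ring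

lemma l2_opNorm_sum_smul_pd1hess2_gaussian_le (x y u : Euc d) :
    ‖∑ k, u k • pd1hess2 (fun x y => gaussian σ (x - y)) k x y‖
      ≤ gaussian σ (x - y) *
          (σ⁻¹ ^ 4 * (3 * (‖x - y‖ * ‖u‖)) + σ⁻¹ ^ 6 * (‖x - y‖ * ‖u‖) * ‖x - y‖ ^ 2) := by
  rw [sum_smul_pd1hess2_gaussian, norm_smul, Real.norm_eq_abs,
    abs_of_pos (gaussian_pos σ (x - y))]
  refine mul_le_mul_of_nonneg_left ?_ (gaussian_pos σ (x - y)).le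
  set t := x - y
  have hdot := abs_dotProduct_le t u
  have hone : ‖(⇑t ⬝ᵥ ⇑u) • (1 : Matrix (Fin d) (Fin d) ℝ)‖ ≤ ‖t‖ * ‖u‖ := by
    rw [norm_smul, Real.norm_eq_abs]
    exact (mul_le_of_le_one_right (abs_nonneg _) l2_opNorm_one_le).trans hdot
  have htu := l2_opNorm_vecMulVec_le t u
  have hut := l2_opNorm_vecMulVec_le u t
  have htt : ‖(σ⁻¹ ^ 6 * (⇑t ⬝ᵥ ⇑u)) • vecMulVec ⇑t ⇑t‖ ≤ σ⁻¹ ^ 6 * (‖t‖ * ‖u‖) * ‖t‖ ^ 2 := by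
    rw [norm_smul, Real.norm_eq_abs, abs_mul, abs_of_nonneg (by positivity), sq]
    gcongr
    exact l2_opNorm_vecMulVec_le t t
  calc _ ≤ ‖σ⁻¹ ^ 4 • ((⇑t ⬝ᵥ ⇑u) • (1 : Matrix (Fin d) (Fin d) ℝ) + vecMulVec ⇑t ⇑u
          + vecMulVec ⇑u ⇑t)‖ + ‖(σ⁻¹ ^ 6 * (⇑t ⬝ᵥ ⇑u)) • vecMulVec ⇑t ⇑t‖ := norm_sub_le _ _
    _ ≤ σ⁻¹ ^ 4 * (‖(⇑t ⬝ᵥ ⇑u) • (1 : Matrix (Fin d) (Fin d) ℝ)‖ + ‖vecMulVec ⇑t ⇑u‖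
          + ‖vecMulVec ⇑u ⇑t‖) + ‖(σ⁻¹ ^ 6 * (⇑t ⬝ᵥ ⇑u)) • vecMulVec ⇑t ⇑t‖ := by
      rw [norm_smul, Real.norm_eq_abs, abs_of_nonneg (by positivity)]
      gcongr
      exact norm_add₃_le
    _ ≤ σ⁻¹ ^ 4 * (‖t‖ * ‖u‖ + ‖t‖ * ‖u‖ + ‖u‖ * ‖t‖) + σ⁻¹ ^ 6 * (‖t‖ * ‖u‖) * ‖t‖ ^ 2 := by
      gcongr
    _ = _ := by ring

lemma sqrt_sum_sq_pd1_gaussian (x y : Euc d) :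
    √(∑ i, pd1 (fun x y => gaussian σ (x - y)) i x y ^ 2)
      = σ⁻¹ ^ 2 * ‖x - y‖ * gaussian σ (x - y) := by
  have hsum : ∑ i, pd1 (fun x y => gaussian σ (x - y)) i x y ^ 2
      = ∑ i, ‖((σ⁻¹ ^ 2 * gaussian σ (x - y)) • (x - y)) i‖ ^ 2 := by
    congr 1; ext i
    rw [pd1_comp_sub, pdv_gaussian, PiLp.smul_apply, smul_eq_mul, Real.norm_eq_abs, sq_abs]
    ring
  rw [hsum, ← EuclideanSpace.norm_eq, norm_smul, Real.norm_eq_abs,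
    abs_of_nonneg (by have := gaussian_pos σ (x - y); positivity)]
  ring

end GaussianBounds

section GaussianNumericalBounds

variable {d : ℕ} {σ : ℝ}

lemma l2_opNorm_hess_gaussian_le_of_sq_le {t : Euc d} (ht : (‖t‖ * σ⁻¹) ^ 2 ≤ 1 / 2) :
    ‖hess (gaussian σ) t‖ ≤ 1.3895 / σ ^ 2 :=
  calc ‖hess (gaussian σ) t‖ ≤ gaussian σ t * (σ⁻¹ ^ 4 * ‖t‖ ^ 2 + σ⁻¹ ^ 2) :=
        l2_opNorm_hess_gaussian_le σ t
    _ = σ⁻¹ ^ 2 * (exp (-(‖t‖ * σ⁻¹) ^ 2 / 2) * (1 + (‖t‖ * σ⁻¹) ^ 2)) := by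
        rw [gaussian_eq_exp_mul_inv]; ring
    _ ≤ σ⁻¹ ^ 2 * 1.3895 := by gcongr; exact exp_neg_sq_half_mul_one_add_sq_le ht
    _ = 1.3895 / σ ^ 2 := by ring

lemma dotProduct_hess_gaussian_mulVec_le_of_sq_le {t : Euc d} (ht : (‖t‖ * σ⁻¹) ^ 2 ≤ 1 / 2)
    (u : Euc d) : ⇑u ⬝ᵥ (hess (gaussian σ) t *ᵥ ⇑u) ≤ -(0.3893 / σ ^ 2) * ‖u‖ ^ 2 :=
  calc ⇑u ⬝ᵥ (hess (gaussian σ) t *ᵥ ⇑u)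
      ≤ gaussian σ t * (σ⁻¹ ^ 4 * ‖t‖ ^ 2 - σ⁻¹ ^ 2) * ‖u‖ ^ 2 :=
        dotProduct_hess_gaussian_mulVec_le σ t u
    _ = -(σ⁻¹ ^ 2 * ‖u‖ ^ 2 * (exp (-(‖t‖ * σ⁻¹) ^ 2 / 2) * (1 - (‖t‖ * σ⁻¹) ^ 2))) := by
        rw [gaussian_eq_exp_mul_inv]; ring
    _ ≤ -(σ⁻¹ ^ 2 * ‖u‖ ^ 2 * 0.3893) := by
        gcongr; exact le_exp_neg_sq_half_mul_one_sub_sq ht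
    _ = -(0.3893 / σ ^ 2) * ‖u‖ ^ 2 := by ring

lemma l2_opNorm_sum_smul_pd1hess2_gaussian_le_of_sq_le (hσ : 0 < σ) {x y : Euc d}
    (ht : (‖x - y‖ * σ⁻¹) ^ 2 ≤ 1 / 2) (u : Euc d) :
    ‖∑ k, u k • pd1hess2 (fun x y => gaussian σ (x - y)) k x y‖ ≤ 2.4750 * ‖u‖ / σ ^ 3 :=
  calc ‖∑ k, u k • pd1hess2 (fun x y => gaussian σ (x - y)) k x y‖
      ≤ gaussian σ (x - y) *
          (σ⁻¹ ^ 4 * (3 * (‖x - y‖ * ‖u‖)) + σ⁻¹ ^ 6 * (‖x - y‖ * ‖u‖) * ‖x - y‖ ^ 2) :=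
        l2_opNorm_sum_smul_pd1hess2_gaussian_le σ x y u
    _ ≤ 1 * (σ⁻¹ ^ 3 * ‖u‖ * ((‖x - y‖ * σ⁻¹) * (3 + (‖x - y‖ * σ⁻¹) ^ 2))) := by
        gcongr
        · exact gaussian_le_one σ (x - y)
        · exact le_of_eq (by ring)
    _ ≤ 1 * (σ⁻¹ ^ 3 * ‖u‖ * 2.4750) := by
        gcongr; exact mul_three_add_sq_le (by positivity) ht
    _ = 2.4750 * ‖u‖ / σ ^ 3 := by ring

lemma abs_gaussian_le_of_le_sq {t : Euc d} (ht : 1 / 2 ≤ (‖t‖ * σ⁻¹) ^ 2) :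
    |gaussian σ t| ≤ 0.7789 := by
  rw [abs_of_pos (gaussian_pos σ t), gaussian_eq_exp_mul_inv]
  exact exp_neg_sq_half_le ht

lemma inv_sq_mul_norm_mul_gaussian_le (hσ : 0 < σ) (t : Euc d) :
    σ⁻¹ ^ 2 * ‖t‖ * gaussian σ t ≤ 0.6066 / σ :=
  calc σ⁻¹ ^ 2 * ‖t‖ * gaussian σ t
      = σ⁻¹ * ((‖t‖ * σ⁻¹) * exp (-(‖t‖ * σ⁻¹) ^ 2 / 2)) := by
        rw [gaussian_eq_exp_mul_inv]; ring
    _ ≤ σ⁻¹ * 0.6066 := by gcongr; exact mul_exp_neg_sq_half_le _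
    _ = 0.6066 / σ := by ring

end GaussianNumericalBounds

/-- explicit derivative bounds for the Gaussian kernel
`C(x,x′) = exp(−‖x−x′‖²/(2σ²))` on `ℝ^d`. -/
theorem stmt19 (d : ℕ) (σ : ℝ) (hσ : 0 < σ)
    (C : Euc d → Euc d → ℝ)
    (hC : ∀ x y : Euc d, C x y = Real.exp (-‖x - y‖ ^ 2 / (2 * σ ^ 2))) :
    -- (a) bounds at small distance ‖x − x′‖₂ ≤ σ/√2
    (∀ x y : Euc d, ‖x - y‖ ≤ σ / Real.sqrt 2 →
      specNorm (hess2 C x y) ≤ 1.3895 / σ ^ 2 ∧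
      (∀ u : Euc d,
        dotProduct (⇑u) ((hess2 C x y).mulVec ⇑u) ≤ -(0.3893 / σ ^ 2) * ‖u‖ ^ 2) ∧
      (∀ u : Euc d,
        specNorm (∑ i, u i • pd1hess2 C i x y) ≤ 2.4750 * ‖u‖ / σ ^ 3)) ∧
    -- (b) bounds at distance ‖x − x′‖₂ ≥ σ/√2
    (∀ x y : Euc d, σ / Real.sqrt 2 ≤ ‖x - y‖ →
      |C x y| ≤ 0.7789 ∧
      Real.sqrt (∑ i, (pd1 C i x y) ^ 2) ≤ 0.6066 / σ) := by
  obtain rfl : C = fun x y => gaussian σ (x - y) := funext₂ hC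
  refine ⟨fun x y hxy => ?_, fun x y hxy => ?_⟩
  · rw [le_div_sqrt_two_iff (norm_nonneg _) hσ] at hxy
    simp only [specNorm_eq_l2_opNorm, hess2_comp_sub]
    exact ⟨l2_opNorm_hess_gaussian_le_of_sq_le hxy,
      dotProduct_hess_gaussian_mulVec_le_of_sq_le hxy,
      l2_opNorm_sum_smul_pd1hess2_gaussian_le_of_sq_le hσ hxy⟩
  · rw [div_sqrt_two_le_iff (norm_nonneg _) hσ] at hxy
    rw [sqrt_sum_sq_pd1_gaussian]
    exact ⟨abs_gaussian_le_of_le_sq hxy, inv_sq_mul_norm_mul_gaussian_le hσ (x - y)⟩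
end
end
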